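/- arXiv:2207.11981 — 10 statements merged into one kernel-verified Lean document; each statement's English description precedes it below -/
import Mathlib

section
/- Let k be a field, g,h ∈ k nonzero constants, r(t) ∈ k[t] a polynomial of degree m, and d a positive integer. If (g·t^d + h)·r(t) = a·t^(d+m) + b for some nonzero a,b ∈ k, then d divides m. -/
open Polynomial

/-- Let k be a field, g,h nonzero constants, r(t) a polynomial of degree m, d > 0.
If (g t^d + h) r(t) = a t^(d+m) + b with a,b nonzero, then d ∣ m. -/
theorem stmt0 {k : Type*} [Field k] (g h a b : k) (hg : g ≠ 0) (hh : h ≠ 0)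
    (ha : a ≠ 0) (hb : b ≠ 0) (r : k[X]) (m d : ℕ) (hm : r.natDegree = m)
    (hd : 0 < d)
    (heq : (C g * X ^ d + C h) * r = C a * X ^ (d + m) + C b) :
    d ∣ m := by
  have heq' : C g * (r * X ^ d) + C h * r = C a * X ^ (d + m) + C b := by
    rw [← heq]; ring
  have key : ∀ n, 0 < n → n < d + m →
      g * (if d ≤ n then r.coeff (n - d) else 0) + h * r.coeff n = 0 := by
    intro n hn0 hnm
    have h1 := congrArg (fun p => p.coeff n) heq'
    have hle : ¬ (d + m ≤ n) := by omega
    simpa [coeff_mul_X_pow', coeff_X_pow, coeff_C, hn0.ne', hnm.ne, hle] using h1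
  have main : ∀ n, 0 < n → n < d + m → r.coeff n ≠ 0 → d ∣ n := by
    intro n
    induction n using Nat.strong_induction_on with
    | _ n ih =>
      intro hn0 hnm hne
      have hk := key n hn0 hnm
      by_cases hdn : d ≤ n
      · rw [if_pos hdn] at hk
        have hprev : r.coeff (n - d) ≠ 0 := by
          intro h0
          rw [h0, mul_zero, zero_add] at hk
          exact hne ((mul_eq_zero.mp hk).resolve_left hh)
        rcases Nat.eq_or_lt_of_le hdn with h | h
        · exact ⟨1, by omega⟩
        · rcases Nat.eq_zero_or_pos (n - d) with h0 | h0
          · omega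
          · obtain ⟨c, hc⟩ := ih (n - d) (by omega) h0 (by omega) hprev
            exact ⟨c + 1, by rw [Nat.mul_succ]; omega⟩
      · rw [if_neg hdn, mul_zero, zero_add] at hk
        exact absurd ((mul_eq_zero.mp hk).resolve_left hh) hne
  rcases Nat.eq_zero_or_pos m with hm0 | hm0
  · simp [hm0]
  · have hr0 : r ≠ 0 := by
      intro h0
      rw [h0, natDegree_zero] at hm; omega
    have hcm : r.coeff m ≠ 0 := by
      rw [← hm]; exact mt leadingCoeff_eq_zero.mp hr0
    exact main m hm0 (by omega) hcm
end

section
/- Let n = 2m+1 be odd and F = Σ_{i=0}^{m} (x_{2i}^q x_{2i+1} − x_{2i} x_{2i+1}^q) over F_q. Then F_{1,0} := Σ_{i=0}^{n} x_i^q · (∂F/∂x_i) is the zero polynomial. In particular F divides F_{1,0}, i.e., the hypersurface {F = 0} ⊂ P^n is Frobenius nonclassical over F_q. -/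
open MvPolynomial

/-- For n = 2m+1 odd and F = Σ_i (x_{2i}^q x_{2i+1} − x_{2i} x_{2i+1}^q) over F_q
(here the n+1 = 2(m+1) variables are indexed by Fin (m+1) × Fin 2, the pair (i,0)
playing the role of x_{2i} and (i,1) that of x_{2i+1}), the polynomial
F_{1,0} = Σ_v x_v^q ∂F/∂x_v is zero; in particular F ∣ F_{1,0}, i.e. {F = 0} is
Frobenius nonclassical over F_q. -/
theorem stmt3 {F : Type*} [Field F] [Fintype F] (q m : ℕ) (hq : Fintype.card F = q)
    (f : MvPolynomial (Fin (m + 1) × Fin 2) F)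
    (hf : f = ∑ i : Fin (m + 1),
      (X (i, 0) ^ q * X (i, 1) - X (i, 0) * X (i, 1) ^ q)) :
    ∑ v : Fin (m + 1) × Fin 2, X v ^ q * pderiv v f = 0 := by
  have hq0 : (q : F) = 0 := hq ▸ FiniteField.cast_card_eq_zero F
  have hq1 : (q : MvPolynomial (Fin (m + 1) × Fin 2) F) = 0 := by
    rw [← C_eq_coe_nat, hq0, map_zero]
  subst hf
  have hd : ∀ v : Fin (m + 1) × Fin 2, ∀ i : Fin (m + 1),
      pderiv v (X (i, (0:Fin 2)) ^ q * X (i, 1) - X (i, 0) * X (i, 1) ^ q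
        : MvPolynomial (Fin (m + 1) × Fin 2) F)
      = (if v = (i, 0) then -(X (i, 1) ^ q) else 0)
        + (if v = (i, 1) then X (i, 0) ^ q else 0) := by
    rintro ⟨j, b⟩ i
    fin_cases b <;>
    · simp only [map_sub, pderiv_mul, Derivation.leibniz_pow, pderiv_X, smul_eq_mul]
      by_cases h : j = i <;>
        simp_all [Pi.single_apply, Prod.ext_iff, hq0, mul_comm, hq1]
  simp only [map_sum, hd, Finset.mul_sum, mul_add, mul_ite, mul_zero]
  rw [Finset.sum_comm]
  simp [Finset.sum_add_distrib, Finset.sum_ite_eq', mul_comm]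
end

section
/- Let F = Σ_{i=0}^{n} x_i^{q^r + q^{r-1} + ... + q + 1} with r ≥ 2, viewed as a polynomial over F_{q^{r+1}}. Then Σ_{i=0}^{n} x_i^{q^{r+1}} · ∂F/∂x_i = F^q. In particular {F=0} is Frobenius nonclassical over F_{q^{r+1}}. -/
open MvPolynomial

/-- Let F = Σ_i x_i^{q^r + ... + q + 1} with r ≥ 2, viewed over F_{q^{r+1}}. Then
Σ_i x_i^{q^{r+1}} ∂F/∂x_i = F^q; in particular {F = 0} is Frobenius nonclassical
over F_{q^{r+1}}. -/
theorem stmt6 {L : Type*} [Field L] [Fintype L] (q r n : ℕ) (hr : 2 ≤ r)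
    (hL : Fintype.card L = q ^ (r + 1))
    (f : MvPolynomial (Fin (n + 1)) L)
    (hf : f = ∑ i : Fin (n + 1), X i ^ (∑ j ∈ Finset.range (r + 1), q ^ j)) :
    ∑ i : Fin (n + 1), X i ^ (q ^ (r + 1)) * pderiv i f = f ^ q := by
  -- characteristic
  set p := ringChar L with hp
  haveI : CharP L p := ringChar.charP L
  obtain ⟨m, hpp, hcard⟩ := FiniteField.card L p
  haveI : Fact p.Prime := ⟨hpp⟩
  -- q is a power of p
  have hq1 : q ≠ 1 := by
    rintro rfl
    simp at hL
    have := Fintype.one_lt_card (α := L)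
    omega
  have hqdvd : q ∣ p ^ (m : ℕ) := by
    rw [← hcard, hL]
    exact dvd_pow_self q (by omega)
  obtain ⟨a, ham, hqa⟩ := (Nat.dvd_prime_pow hpp).mp hqdvd
  have ha0 : a ≠ 0 := by
    rintro rfl; simp at hqa; exact hq1 hqa
  have hqL : (q : L) = 0 := by
    rw [hqa]; push_cast; rw [CharP.cast_eq_zero L p]; simp [ha0]
  -- exponent facts
  set E := ∑ j ∈ Finset.range (r + 1), q ^ j with hE
  have hE1 : 1 ≤ E := by
    rw [hE]
    calc 1 = q ^ 0 := by simp
    _ ≤ _ := Finset.single_le_sum (f := fun j => q ^ j) (fun _ _ => Nat.zero_le _)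
        (Finset.mem_range.mpr (by omega))
  have hexp : q ^ (r + 1) + (E - 1) = E * q := by
    have h1 : ∑ j ∈ Finset.range (r + 2), q ^ j = E + q ^ (r + 1) := Finset.sum_range_succ _ _
    have h2 : ∑ j ∈ Finset.range (r + 2), q ^ j = (∑ j ∈ Finset.range (r + 1), q ^ (j + 1)) + q ^ 0 :=
      Finset.sum_range_succ' _ _
    simp only [pow_zero] at h2
    have h3 : E * q = ∑ j ∈ Finset.range (r + 1), q ^ (j + 1) := by
      rw [hE, Finset.sum_mul]
      exact Finset.sum_congr rfl fun j _ => by ring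
    omega
  -- cast of E is 1
  have hEL : (E : L) = 1 := by
    rw [hE]
    push_cast
    rw [Finset.sum_eq_single 0]
    · simp
    · intro b _ hb
      rw [hqL, zero_pow hb]
    · simp
  subst hf
  -- compute the derivative
  have hderiv : ∀ i : Fin (n + 1),
      pderiv i (∑ k : Fin (n + 1), (X k : MvPolynomial (Fin (n + 1)) L) ^ E) = X i ^ (E - 1) := by
    intro i
    rw [map_sum, Finset.sum_eq_single i]
    · rw [Derivation.leibniz_pow, pderiv_X_self]
      simp only [smul_eq_mul, mul_one, nsmul_eq_mul]
      rw [show ((E : ℕ) : MvPolynomial (Fin (n+1)) L) = C (E : L) by rfl, hEL]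
      simp
    · intro b _ hb
      rw [Derivation.leibniz_pow, pderiv_X_of_ne (by exact hb), smul_zero, smul_zero]
    · simp
  calc ∑ i : Fin (n + 1), X i ^ (q ^ (r + 1)) * pderiv i (∑ k : Fin (n + 1), (X k : MvPolynomial (Fin (n + 1)) L) ^ E)
      = ∑ i : Fin (n + 1), (X i : MvPolynomial (Fin (n + 1)) L) ^ (E * q) := by
        refine Finset.sum_congr rfl fun i _ => ?_
        rw [hderiv i, ← pow_add, hexp]
    _ = (∑ i : Fin (n + 1), (X i : MvPolynomial (Fin (n + 1)) L) ^ E) ^ q := by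
        rw [hqa, sum_pow_char_pow]
        exact Finset.sum_congr rfl fun i _ => by rw [← pow_mul]
end

section
/- Let X = {F = 0} ⊂ P^n be a hypersurface of degree d over F_q with d ≤ q+1 and n ≥ 2, such that F is not a p-th power (p = char F_q). Then there exists an F_q-rational hyperplane H ⊂ P^n such that H is not contained in X and the restriction F|_H is not a p-th power. -/
/-!
If `F` is not a `p`-th power, some `G = ∂F/∂x_k` is nonzero. If every restriction of `F` to a
hyperplane `x_k = ∑_{j ≠ k} c_j x_j` were zero or a `p`-th power, its partial derivatives would
vanish, so by the chain rule `∂F/∂x_j + c_j G` vanishes on that hyperplane. As polynomials in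
`x_k` over the other variables these have degree `≤ d - 1 ≤ q` and a constant `x_k^q`-coefficient.
Taking `c = γ e_a + t e_b` with `γ` fixed, the one for `j = a` has the `q` distinct roots
`γ x_a + t x_b`, `t ∈ 𝔽_q`, hence is a constant multiple of `∏_t (x_k - γ x_a - t x_b)`.
Subtracting the cases `γ = 1` and `γ = 0` puts `G` in this form; doing the same with `a` and `b`
swapped and specialising `x_a = 1` and all other variables to `0` forces `G = 0`.
-/

open MvPolynomial

namespace MvPolynomial

section PthPower

variable {K σ : Type*} [CommRing K] [NoZeroDivisors K] (p : ℕ) [CharP K p]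

theorem dvd_of_mem_support_of_forall_pderiv_eq_zero {f : MvPolynomial σ K}
    (hf : ∀ i, pderiv i f = 0) {α : σ →₀ ℕ} (hα : α ∈ f.support) (i : σ) :
    p ∣ α i := by
  rcases Nat.eq_zero_or_pos (α i) with hαi | hαi
  · simp [hαi]
  have hle : Finsupp.single i 1 ≤ α := Finsupp.single_le_iff.mpr hαi
  have hcoeff := coeff_pderiv (i := i) f (α - Finsupp.single i 1)
  rw [hf i, coeff_zero, tsub_add_cancel_of_le hle, Finsupp.tsub_apply, Finsupp.single_eq_same,
    ← Nat.cast_add_one, Nat.sub_add_cancel hαi] at hcoeff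
  exact (CharP.cast_eq_zero_iff K p _).mp
    ((mul_eq_zero.mp hcoeff.symm).resolve_left (mem_support_iff.mp hα))

theorem exists_eq_pow_of_forall_pderiv_eq_zero [Fact p.Prime] [PerfectRing K p]
    {f : MvPolynomial σ K} (hf : ∀ i, pderiv i f = 0) : ∃ g, f = g ^ p := by
  refine ⟨∑ α ∈ f.support, monomial (α.mapRange (· / p) (Nat.zero_div p))
      ((frobeniusEquiv K p).symm (coeff α f)), ?_⟩
  rw [sum_pow_char]
  conv_lhs => rw [f.as_sum]
  refine Finset.sum_congr rfl fun α hα => ?_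
  have hdiv : p • α.mapRange (· / p) (Nat.zero_div p) = α := by
    ext j
    exact Nat.mul_div_cancel' (dvd_of_mem_support_of_forall_pderiv_eq_zero p hf hα j)
  rw [monomial_pow, hdiv, frobeniusEquiv_symm_pow_p]

end PthPower

variable {R : Type*} [CommSemiring R]

theorem pderiv_pow_char (p : ℕ) [CharP R p] {σ : Type*} (i : σ) (g : MvPolynomial σ R) :
    pderiv i (g ^ p) = 0 := by
  rw [pderiv_pow, CharP.cast_eq_zero, zero_mul, zero_mul]

theorem totalDegree_pderiv_le {σ : Type*} (i : σ) (f : MvPolynomial σ R) :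
    (pderiv i f).totalDegree ≤ f.totalDegree - 1 := by
  refine Finset.sup_le fun β hβ => ?_
  have hmem : β + Finsupp.single i 1 ∈ f.support := by
    rw [mem_support_iff, coeff_pderiv] at hβ
    exact mem_support_iff.mpr (left_ne_zero_of_mul hβ)
  have := le_totalDegree hmem
  rw [Finsupp.sum_add_index' (fun _ => rfl) (fun _ _ _ => rfl),
    Finsupp.sum_single_index rfl] at this
  omega

theorem pderiv_aeval {ι τ : Type*} [Fintype ι] (S : ι → MvPolynomial τ R) (j : τ)
    (f : MvPolynomial ι R) :
    pderiv j (aeval S f) = ∑ i, aeval S (pderiv i f) * pderiv j (S i) := by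
  classical
  induction f using MvPolynomial.induction_on with
  | C a => simp
  | add f g hf hg => simp only [map_add, hf, hg, add_mul, Finset.sum_add_distrib]
  | mul_X f i hf =>
    simp only [map_mul, aeval_X, pderiv_mul, hf, pderiv_X, Pi.single_apply, mul_ite, mul_one,
      mul_zero, map_add, add_mul, Finset.sum_add_distrib, Finset.sum_mul, apply_ite (aeval S),
      map_zero, ite_mul, zero_mul, Finset.sum_ite_eq, Finset.mem_univ, if_true]
    exact congrArg₂ _ (Finset.sum_congr rfl fun _ _ => by ring) rfl

/-- Restriction along the linear map `M`: the paper's `F|_H` when `M` parametrises `H`. -/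
noncomputable def linearSubst {σ τ : Type*} [Fintype τ] (M : Matrix σ τ R) :
    MvPolynomial σ R →ₐ[R] MvPolynomial τ R :=
  aeval fun i => ∑ j, C (M i j) * X j

theorem pderiv_linearSubst {σ τ : Type*} [Fintype σ] [Fintype τ] (M : Matrix σ τ R) (j : τ)
    (f : MvPolynomial σ R) :
    pderiv j (linearSubst M f) = ∑ i, linearSubst M (pderiv i f) * C (M i j) := by
  classical
  rw [linearSubst, pderiv_aeval]
  simp [pderiv_X, Pi.single_apply]

variable {n : ℕ}

/-- `MvPolynomial.finSuccEquiv` with the variable `k` singled out instead of `0`. -/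
noncomputable def finSuccEquiv' (R : Type*) [CommSemiring R] (k : Fin (n + 1)) :
    MvPolynomial (Fin (n + 1)) R ≃ₐ[R] Polynomial (MvPolynomial (Fin n) R) :=
  (renameEquiv R ((_root_.finSuccEquiv' k).trans (_root_.finSuccEquiv n).symm)).trans
    (finSuccEquiv R n)

theorem finSuccEquiv'_apply (k : Fin (n + 1)) (f : MvPolynomial (Fin (n + 1)) R) :
    finSuccEquiv' R k f =
      finSuccEquiv R n (rename ((_root_.finSuccEquiv' k).trans (_root_.finSuccEquiv n).symm) f) :=
  rfl

@[simp]
theorem finSuccEquiv'_X_self (k : Fin (n + 1)) :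
    finSuccEquiv' R k (X k) = Polynomial.X := by
  simp [finSuccEquiv', finSuccEquiv_X_zero]

@[simp]
theorem finSuccEquiv'_X_succAbove (k : Fin (n + 1)) (j : Fin n) :
    finSuccEquiv' R k (X (k.succAbove j)) = Polynomial.C (X j) := by
  simp [finSuccEquiv', finSuccEquiv_X_succ]

theorem natDegree_finSuccEquiv'_le (k : Fin (n + 1)) (f : MvPolynomial (Fin (n + 1)) R) :
    (finSuccEquiv' R k f).natDegree ≤ f.totalDegree := by
  rw [finSuccEquiv'_apply, natDegree_finSuccEquiv]
  exact (degreeOf_le_totalDegree _ 0).trans (totalDegree_rename_le _ f)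

theorem exists_coeff_finSuccEquiv'_eq_C {k : Fin (n + 1)} {m : ℕ}
    {f : MvPolynomial (Fin (n + 1)) R} (hf : f.totalDegree ≤ m) :
    ∃ s : R, (finSuccEquiv' R k f).coeff m = C s := by
  rw [finSuccEquiv'_apply]
  have hg := (totalDegree_rename_le
    ((_root_.finSuccEquiv' k).trans (_root_.finSuccEquiv n).symm) f).trans hf
  generalize rename _ f = g at hg ⊢
  by_cases h0 : (finSuccEquiv R n g).coeff m = 0
  · exact ⟨0, by rw [h0, C_0]⟩
  refine ⟨_, totalDegree_eq_zero_iff_eq_C.mp ?_⟩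
  have := totalDegree_coeff_finSuccEquiv_add_le _ m h0
  omega

end MvPolynomial

section HyperplaneMatrix

variable {n : ℕ}

/-- Parametrises the hyperplane `x_k = ∑_j c_j x_{k.succAbove j}` by the coordinates other
than `x_k`. -/
def hyperplaneMatrix {R : Type*} [Zero R] [One R] (k : Fin (n + 1)) (c : Fin n → R) :
    Matrix (Fin (n + 1)) (Fin n) R :=
  Fin.insertNth k c (1 : Matrix (Fin n) (Fin n) R)

variable {R : Type*} [CommSemiring R]

theorem hyperplaneMatrix_self (k : Fin (n + 1)) (c : Fin n → R) :
    hyperplaneMatrix k c k = c :=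
  Fin.insertNth_apply_same _ _ _

theorem hyperplaneMatrix_succAbove (k : Fin (n + 1)) (c : Fin n → R) (j : Fin n) :
    hyperplaneMatrix k c (k.succAbove j) = (1 : Matrix (Fin n) (Fin n) R) j :=
  Fin.insertNth_apply_succAbove _ _ _ _

theorem hyperplaneMatrix_mulVec_succAbove (k : Fin (n + 1)) (c v : Fin n → R) (j : Fin n) :
    (hyperplaneMatrix k c).mulVec v (k.succAbove j) = v j := by
  simp [Matrix.mulVec, hyperplaneMatrix_succAbove, dotProduct, Matrix.one_apply]

theorem injective_mulVec_hyperplaneMatrix (k : Fin (n + 1)) (c : Fin n → R) :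
    Function.Injective (hyperplaneMatrix k c).mulVec := by
  intro v w h
  funext j
  rw [← hyperplaneMatrix_mulVec_succAbove k c v, h, hyperplaneMatrix_mulVec_succAbove]

theorem linearSubst_hyperplaneMatrix (k : Fin (n + 1)) (c : Fin n → R)
    (f : MvPolynomial (Fin (n + 1)) R) :
    linearSubst (hyperplaneMatrix k c) f = (finSuccEquiv' R k f).eval (∑ j, C (c j) * X j) := by
  suffices linearSubst (hyperplaneMatrix k c) =
      ((Polynomial.aeval (∑ j, C (c j) * X j)).restrictScalars R).comp
        (finSuccEquiv' R k).toAlgHom by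
    simpa using DFunLike.congr_fun this f
  refine algHom_ext fun i => ?_
  obtain rfl | ⟨j, rfl⟩ := k.eq_self_or_eq_succAbove i
  · simp [linearSubst, hyperplaneMatrix_self]
  · simp [linearSubst, hyperplaneMatrix_succAbove, Matrix.one_apply]

theorem pderiv_linearSubst_hyperplaneMatrix (k : Fin (n + 1)) (c : Fin n → R)
    (f : MvPolynomial (Fin (n + 1)) R) (j : Fin n) :
    pderiv j (linearSubst (hyperplaneMatrix k c) f) =
      linearSubst (hyperplaneMatrix k c) (pderiv (k.succAbove j) f + C (c j) * pderiv k f) := by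
  rw [pderiv_linearSubst, Fin.sum_univ_succAbove _ k]
  simp [hyperplaneMatrix_self, hyperplaneMatrix_succAbove, Matrix.one_apply, add_comm, mul_comm]

end HyperplaneMatrix

namespace Polynomial

variable {R : Type*} [CommRing R]

/-- Over an `𝔽_q`-algebra this is `∏_{t ∈ 𝔽_q} (X - (u + t b))`. -/
noncomputable def lineVanishingPoly (q : ℕ) (u b : R) : R[X] :=
  X ^ q - C (b ^ (q - 1)) * X - C (u ^ q - b ^ (q - 1) * u)

theorem natDegree_lineVanishingPoly_le {q : ℕ} (hq : 1 ≤ q) (u b : R) :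
    (lineVanishingPoly q u b).natDegree ≤ q := by
  unfold lineVanishingPoly
  compute_degree
  omega

theorem coeff_lineVanishingPoly_self {q : ℕ} (hq : 2 ≤ q) (u b : R) :
    (lineVanishingPoly q u b).coeff q = 1 := by
  simp only [lineVanishingPoly, coeff_sub, coeff_X_pow_self, coeff_C_mul, coeff_X, coeff_C,
    if_neg (show 1 ≠ q by omega), if_neg (show q ≠ 0 by omega), mul_zero, sub_zero]

variable {F : Type*} [Field F] [Fintype F] [Algebra F R] {q : ℕ}

theorem eval_lineVanishingPoly [Nontrivial R] (hq : Fintype.card F = q) (u b : R) (t : F) :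
    (lineVanishingPoly q u b).eval (u + algebraMap F R t * b) = 0 := by
  set p := ringChar F
  obtain ⟨v, hp, hcard⟩ := FiniteField.card F p
  have : Fact p.Prime := ⟨hp⟩
  have : CharP R p := charP_of_injective_algebraMap (algebraMap F R).injective p
  have hfrob : (u + algebraMap F R t * b) ^ q = u ^ q + algebraMap F R t * b ^ q := by
    rw [← hq, hcard, add_pow_char_pow, mul_pow, ← map_pow, ← hcard, FiniteField.pow_card]
  have hbq : b ^ q = b ^ (q - 1) * b := by
    rw [← pow_succ, Nat.sub_add_cancel (hq ▸ Fintype.card_pos)]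
  simp only [lineVanishingPoly, eval_sub, eval_pow, eval_X, eval_mul, eval_C, hfrob, hbq]
  ring

theorem eq_C_coeff_mul_lineVanishingPoly [IsDomain R] (hq : Fintype.card F = q) {P : R[X]}
    {u b : R} (hb : b ≠ 0) (hdeg : P.natDegree ≤ q)
    (hP : ∀ t : F, P.eval (u + algebraMap F R t * b) = 0) :
    P = C (P.coeff q) * lineVanishingPoly q u b := by
  have hq2 : 2 ≤ q := hq ▸ Fintype.one_lt_card
  have hline : Function.Injective fun t : F => u + algebraMap F R t * b := fun t t' h =>
    (algebraMap F R).injective (mul_right_cancel₀ hb (add_left_cancel h))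
  rw [← sub_eq_zero]
  refine eq_zero_of_natDegree_lt_card_of_eval_eq_zero _ hline (fun t => ?_) ?_
  · simp [hP, eval_lineVanishingPoly hq]
  · have hle : (P - C (P.coeff q) * lineVanishingPoly q u b).natDegree ≤ q :=
      (natDegree_sub_le _ _).trans (max_le hdeg
        ((natDegree_C_mul_le _ _).trans (natDegree_lineVanishingPoly_le (by omega) u b)))
    have := natDegree_le_pred hle (by simp [coeff_lineVanishingPoly_self hq2])
    omega

end Polynomial

open Polynomial (lineVanishingPoly)

namespace MvPolynomial

theorem eq_zero_of_eq_lineVanishingPoly {K σ : Type*} [Field K] [DecidableEq σ] {q : ℕ}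
    (hq : 2 ≤ q) {j j' : σ} (hj : j ≠ j') {Q : Polynomial (MvPolynomial σ K)}
    {s₀ s₁ s₀' s₁' : K}
    (h : Q = Polynomial.C (C s₁) * lineVanishingPoly q (X j) (X j') -
      Polynomial.C (C s₀) * lineVanishingPoly q 0 (X j'))
    (h' : Q = Polynomial.C (C s₁') * lineVanishingPoly q (X j') (X j) -
      Polynomial.C (C s₀') * lineVanishingPoly q 0 (X j)) :
    Q = 0 := by
  have hev (x : K) :=
    congrArg (fun P => (P.map (eval (Pi.single j 1))).eval x) (h.symm.trans h')
  have hq₀ : q ≠ 0 := by omega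
  have hq₁ : q - 1 ≠ 0 := by omega
  have hs₁ : s₁ = 0 := by
    simpa [lineVanishingPoly, Pi.single_eq_of_ne hj.symm, zero_pow hq₀, zero_pow hq₁]
      using hev 0
  have hs₀ : s₀ = 0 := by
    simpa [lineVanishingPoly, Pi.single_eq_of_ne hj.symm, zero_pow hq₀, zero_pow hq₁, hs₁]
      using hev 1
  simp [h, hs₀, hs₁]

variable {F : Type*} [Field F] [Fintype F] {q n : ℕ}

theorem exists_finSuccEquiv'_pderiv_eq_lineVanishingPoly (hq : Fintype.card F = q)
    {f : MvPolynomial (Fin (n + 1)) F} (hf : f.totalDegree ≤ q + 1) {k : Fin (n + 1)}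
    (h : ∀ c j, pderiv j (linearSubst (hyperplaneMatrix k c) f) = 0)
    {j j' : Fin n} (hj : j ≠ j') :
    ∃ s₀ s₁ : F, finSuccEquiv' F k (pderiv k f) =
      Polynomial.C (C s₁) * lineVanishingPoly q (X j) (X j') -
        Polynomial.C (C s₀) * lineVanishingPoly q 0 (X j') := by
  have hdeg : ∀ γ : F, (pderiv (k.succAbove j) f + C γ * pderiv k f).totalDegree ≤ q := by
    intro γ
    have := totalDegree_pderiv_le k f
    have := totalDegree_pderiv_le (k.succAbove j) f
    rw [C_mul']
    exact (totalDegree_add _ _).trans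
      (max_le (by omega) ((totalDegree_smul_le γ _).trans (by omega)))
  have hline : ∀ γ : F, ∃ s : F,
      finSuccEquiv' F k (pderiv (k.succAbove j) f + C γ * pderiv k f) =
        Polynomial.C (C s) * lineVanishingPoly q (C γ * X j) (X j') := by
    intro γ
    obtain ⟨s, hs⟩ := exists_coeff_finSuccEquiv'_eq_C (k := k) (hdeg γ)
    refine ⟨s, hs ▸ Polynomial.eq_C_coeff_mul_lineVanishingPoly hq (X_ne_zero j')
      ((natDegree_finSuccEquiv'_le k _).trans (hdeg γ)) fun t => ?_⟩
    -- the hyperplane `x_k = γ x_j + t x_{j'}`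
    have := h (Pi.single j γ + Pi.single j' t) j
    rw [pderiv_linearSubst_hyperplaneMatrix, linearSubst_hyperplaneMatrix] at this
    simpa [Finset.sum_add_distrib, Pi.single_apply, hj.symm, add_mul, apply_ite C, ite_mul]
      using this
  obtain ⟨s₀, h₀⟩ := hline 0
  obtain ⟨s₁, h₁⟩ := hline 1
  refine ⟨s₀, s₁, ?_⟩
  simp only [C_0, C_1, zero_mul, one_mul, add_zero] at h₀ h₁
  rw [← h₀, ← h₁, map_add]
  ring

theorem pderiv_eq_zero_of_forall_pderiv_linearSubst_hyperplaneMatrix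
    (hq : Fintype.card F = q) (hn : 2 ≤ n) {f : MvPolynomial (Fin (n + 1)) F}
    (hf : f.totalDegree ≤ q + 1) (k : Fin (n + 1))
    (h : ∀ c j, pderiv j (linearSubst (hyperplaneMatrix k c) f) = 0) :
    pderiv k f = 0 := by
  have h01 : (⟨0, by omega⟩ : Fin n) ≠ ⟨1, by omega⟩ := by simp
  obtain ⟨s₀, s₁, h₁⟩ := exists_finSuccEquiv'_pderiv_eq_lineVanishingPoly hq hf h h01
  obtain ⟨s₀', s₁', h₂⟩ := exists_finSuccEquiv'_pderiv_eq_lineVanishingPoly hq hf h h01.symm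
  have hq2 : 2 ≤ q := hq ▸ Fintype.one_lt_card
  exact (finSuccEquiv' F k).injective
    ((eq_zero_of_eq_lineVanishingPoly hq2 h01 h₁ h₂).trans (map_zero _).symm)

end MvPolynomial

/-- Let X = {F = 0} ⊂ P^n be a hypersurface of degree d over F_q with d ≤ q+1,
n ≥ 2, and F not a p-th power. Then there is an F_q-hyperplane H (given here by
an injective linear parametrization M : F_q^n → F_q^{n+1}) not contained in X
such that the restriction F|_H is not a p-th power. -/
theorem stmt7 {F : Type*} [Field F] [Fintype F] (q p n d : ℕ)
    (hq : Fintype.card F = q) (hp : p = ringChar F)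
    (hn : 2 ≤ n) (f : MvPolynomial (Fin (n + 1)) F) (hhom : f.IsHomogeneous d)
    (hd : d ≤ q + 1)
    (hnp : ¬ ∃ g : MvPolynomial (Fin (n + 1)) F, f = g ^ p) :
    ∃ M : Matrix (Fin (n + 1)) (Fin n) F,
      Function.Injective M.mulVec ∧
      aeval (fun i => ∑ j, C (M i j) * X j) f ≠ 0 ∧
      ¬ ∃ g : MvPolynomial (Fin n) F,
        aeval (fun i => ∑ j, C (M i j) * X j) f = g ^ p := by
  subst hp
  have : Fact (ringChar F).Prime := ⟨CharP.char_is_prime F _⟩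
  obtain ⟨k, hk⟩ : ∃ k, pderiv k f ≠ 0 := by
    by_contra! hf
    exact hnp (exists_eq_pow_of_forall_pderiv_eq_zero _ hf)
  by_contra! hrestrict
  refine hk (pderiv_eq_zero_of_forall_pderiv_linearSubst_hyperplaneMatrix hq hn
    (hhom.totalDegree_le.trans hd) k fun c j => ?_)
  by_cases h0 : linearSubst (hyperplaneMatrix k c) f = 0
  · rw [h0, map_zero]
  obtain ⟨g, hg⟩ := hrestrict _ (injective_mulVec_hyperplaneMatrix k c) h0
  rw [linearSubst, hg, pderiv_pow_char]
end

section
/- Let X ⊂ P^n be a Frobenius nonclassical hypersurface over F_q, p = char(F_q), and let L be an F_q-line not contained in X such that the binary form F|_L is not a p-th power. Then L ∩ X contains at least one F_q-rational point, and at every point of L ∩ X not defined over F_q, the intersection multiplicity is divisible by p. -/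
/-!
Restricting the form `f` to the line `x = M y` preserves Frobenius nonclassicality, because the
entries of `M` are fixed by `c ↦ c ^ q`; so the binary form `g` divides `y₀ ^ q ∂₀g + y₁ ^ q ∂₁g`.
Setting `y₁ = 1` and subtracting Euler's identity turns this into `G ∣ (x ^ q - x) G'` for the
dehomogenization `G = g(x, 1)`. At a root `α` with `α ^ q ≠ α`, the factor `(x - α) ^ e` of `G`
must then divide `G'`, which forces `p ∣ e`. If `L ∩ X` had no `𝔽_q`-point, `G` would be coprime
to `x ^ q - x`, hence `G ∣ G'` and `G' = 0`; together with `g(1, 0) ≠ 0` this makes every exponent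
of `g` divisible by `p`, so `g` is a `p`-th power over the perfect field `𝔽_q`.
-/

open Polynomial in
theorem FiniteField.mem_range_algebraMap_of_pow_card_eq {F A : Type*} [Field F] [Fintype F]
    [CommRing A] [IsDomain A] [Algebra F A] {a : A} (ha : a ^ Fintype.card F = a) :
    a ∈ Set.range (algebraMap F A) := by
  have hroots := roots_map_of_injective_of_card_eq_natDegree (algebraMap F A).injective
    (p := X ^ Fintype.card F - X) (by
      rw [FiniteField.roots_X_pow_card_sub_X, FiniteField.X_pow_card_sub_X_natDegree_eq _
        Fintype.one_lt_card]
      rfl)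
  have hne : (X ^ Fintype.card F - X : F[X]).map (algebraMap F A) ≠ 0 :=
    (Polynomial.map_ne_zero_iff (algebraMap F A).injective).2
      (FiniteField.X_pow_card_sub_X_ne_zero F Fintype.one_lt_card)
  have : a ∈ ((X ^ Fintype.card F - X : F[X]).map (algebraMap F A)).roots := by
    rw [mem_roots hne]
    simp [ha]
  rw [← hroots, FiniteField.roots_X_pow_card_sub_X] at this
  simpa using this

namespace Polynomial

section FiniteField

variable {F : Type*} [Field F] [Fintype F]

theorem isCoprime_X_pow_card_sub_X {G : F[X]} (hG : ∀ a, ¬ G.IsRoot a) :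
    IsCoprime G (X ^ Fintype.card F - X) := by
  rw [isCoprime_iff_aeval_ne_zero]
  intro A _ _ _ a
  by_contra! h
  obtain ⟨b, rfl⟩ := FiniteField.mem_range_algebraMap_of_pow_card_eq
    (by simpa [sub_eq_zero] using h.2)
  rw [aeval_algebraMap_apply, map_eq_zero_iff _ (algebraMap F A).injective] at h
  exact hG b h.1

theorem derivative_eq_zero_of_dvd_X_pow_card_sub_X_mul {G : F[X]}
    (hdvd : G ∣ (X ^ Fintype.card F - X) * derivative G) (hG : ∀ a, ¬ G.IsRoot a) :
    derivative G = 0 :=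
  dvd_derivative_iff.1 ((isCoprime_X_pow_card_sub_X hG).dvd_of_dvd_mul_left hdvd)

end FiniteField

theorem dvd_rootMultiplicity_of_dvd_mul_derivative {K : Type*} [Field K] (p : ℕ) [CharP K p]
    {P Q : K[X]} (hdvd : P ∣ Q * derivative P) {α : K} (hα : ¬ Q.IsRoot α) :
    p ∣ P.rootMultiplicity α := by
  by_contra hpe
  have hP : P ≠ 0 := by rintro rfl; simp at hpe
  have hroot : P.IsRoot α := by
    by_contra h
    rw [rootMultiplicity_eq_zero h] at hpe
    simp at hpe
  have hcop : IsCoprime ((X - C α) ^ P.rootMultiplicity α) Q :=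
    ((irreducible_X_sub_C α).coprime_iff_not_dvd.2 (by rwa [dvd_iff_isRoot])).pow_left
  have hder : P.derivative.rootMultiplicity α = P.rootMultiplicity α - 1 :=
    derivative_rootMultiplicity_of_root_of_mem_nonZeroDivisors hroot
      (mem_nonZeroDivisors_of_ne_zero (mt (CharP.cast_eq_zero_iff K p _).1 hpe))
  by_cases hP' : derivative P = 0
  · have := (one_lt_rootMultiplicity_iff_isRoot hP).2 ⟨hroot, by simp [hP']⟩
    rw [hP', rootMultiplicity_zero] at hder
    omega
  · have := (le_rootMultiplicity_iff hP').2
      (hcop.dvd_of_dvd_mul_left ((pow_rootMultiplicity_dvd P α).trans hdvd))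
    have := (rootMultiplicity_pos hP).2 hroot
    omega

theorem dvd_of_coeff_ne_zero_of_derivative_eq_zero {R : Type*} [CommRing R] [IsDomain R] (p : ℕ)
    [CharP R p] {G : R[X]} (hG : derivative G = 0) {k : ℕ} (hk : G.coeff k ≠ 0) : p ∣ k := by
  obtain _ | n := k
  · exact dvd_zero p
  have h := congrArg (coeff · n) hG
  simp only [coeff_derivative, coeff_zero, mul_eq_zero, hk, false_or] at h
  exact (CharP.cast_eq_zero_iff R p _).1 (by exact_mod_cast h)

end Polynomial

open MvPolynomial

theorem Derivation.map_aeval_mvPolynomial {R A M σ : Type*} [CommSemiring R] [CommSemiring A]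
    [Algebra R A] [AddCommMonoid M] [Module A M] [Module R M] [IsScalarTower R A M] [Fintype σ]
    (D : Derivation R A M) (v : σ → A) (f : MvPolynomial σ R) :
    D (aeval v f) = ∑ i, aeval v (pderiv i f) • D (v i) := by
  classical
  induction f using MvPolynomial.induction_on with
  | C a => simp
  | add f g hf hg => simp [hf, hg, add_smul, Finset.sum_add_distrib]
  | mul_X f i hf =>
    simp [Derivation.leibniz, hf, add_smul, mul_smul, Finset.sum_add_distrib, ← Finset.smul_sum,
      pderiv_X, Pi.single_apply, apply_ite (aeval v), ite_smul]

namespace MvPolynomial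

theorem expand_card {σ K : Type*} [Field K] [Fintype K] (f : MvPolynomial σ K) :
    expand (Fintype.card K) f = f ^ Fintype.card K := by
  obtain ⟨n, hp, hcard⟩ := FiniteField.card K (ringChar K)
  have : Fact (ringChar K).Prime := ⟨hp⟩
  have hid : iterateFrobenius K (ringChar K) n = RingHom.id K := by
    ext x
    simp [iterateFrobenius_def, ← hcard, FiniteField.pow_card]
  rw [hcard, ← map_iterateFrobenius_expand, hid, map_id]

theorem exists_eq_pow_of_forall_dvd {σ R : Type*} [CommSemiring R] {p : ℕ} [ExpChar R p]
    [PerfectRing R p] {g : MvPolynomial σ R} (hg : ∀ m ∈ g.support, ∀ i, p ∣ m i) :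
    ∃ h : MvPolynomial σ R, g = h ^ p := by
  refine ⟨∑ m ∈ g.support,
    monomial (m.mapRange (· / p) (Nat.zero_div p)) ((frobeniusEquiv R p).symm (coeff m g)), ?_⟩
  rw [sum_pow_char]
  conv_lhs => rw [g.as_sum]
  refine Finset.sum_congr rfl fun m hm => ?_
  rw [monomial_pow, frobeniusEquiv_symm_pow_p]
  congr
  ext i
  simp [Nat.mul_div_cancel' (hg m hm i)]

section Dehomogenize

variable {F : Type*} [Field F]

theorem eval_aeval_X_one (g : MvPolynomial (Fin 2) F) (a : F) :
    (aeval ![Polynomial.X, (1 : Polynomial F)] g).eval a = eval ![a, 1] g := by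
  have hv : (fun i => Polynomial.aeval a (![Polynomial.X, (1 : Polynomial F)] i)) = ![a, 1] := by
    ext i
    fin_cases i <;> simp
  rw [← Polynomial.coe_aeval_eq_eval, comp_aeval_apply, hv]
  rfl

theorem derivative_aeval_X_one (g : MvPolynomial (Fin 2) F) :
    Polynomial.derivative (aeval ![Polynomial.X, (1 : Polynomial F)] g)
      = aeval ![Polynomial.X, (1 : Polynomial F)] (pderiv 0 g) := by
  simpa using (Polynomial.derivative' (R := F)).map_aeval_mvPolynomial ![Polynomial.X, 1] g

theorem eval_one_zero_homogenize (G : Polynomial F) (n : ℕ) :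
    eval ![1, 0] (G.homogenize n) = G.coeff n := by
  rw [Polynomial.homogenize, map_sum, Finset.sum_eq_single (n, 0)]
  · simp [eval_monomial, Finsupp.prod_fintype]
  · rintro ⟨k, l⟩ hkl hne
    have hl : l ≠ 0 := by
      rintro rfl
      simp_all
    simp [eval_monomial, Finsupp.prod_fintype, hl]
  · simp

theorem IsHomogeneous.exists_eq_pow_of_derivative_aeval_eq_zero {p : ℕ}
    [CharP F p] [Fact p.Prime] [PerfectRing F p] {g : MvPolynomial (Fin 2) F} {d : ℕ}
    (hg : g.IsHomogeneous d)
    (hG : Polynomial.derivative (MvPolynomial.aeval ![Polynomial.X, (1 : Polynomial F)] g) = 0)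
    (h10 : eval ![1, 0] g ≠ 0) : ∃ h : MvPolynomial (Fin 2) F, g = h ^ p := by
  have hGg := Polynomial.homogenize_eq_of_isHomogeneous hg rfl
  have hd : p ∣ d := Polynomial.dvd_of_coeff_ne_zero_of_derivative_eq_zero p hG
    (by rwa [← eval_one_zero_homogenize, hGg])
  refine exists_eq_pow_of_forall_dvd fun m hm => ?_
  rw [mem_support_iff, ← hGg, Polynomial.coeff_homogenize] at hm
  obtain ⟨hmd, hm⟩ := ite_ne_right_iff.1 hm
  have h0 : p ∣ m 0 := Polynomial.dvd_of_coeff_ne_zero_of_derivative_eq_zero p hG hm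
  intro i
  fin_cases i
  · exact h0
  · exact (Nat.dvd_add_right h0).1 (hmd ▸ hd)

end Dehomogenize

section FrobeniusNonclassical

variable {F σ : Type*} [Field F] [Fintype F] [Fintype σ]

def IsFrobeniusNonclassical (f : MvPolynomial σ F) : Prop :=
  f ∣ ∑ i, X i ^ Fintype.card F * pderiv i f

theorem aeval_sum_X_pow_card_mul_pderiv {τ : Type*} [Fintype τ] (M : Matrix σ τ F)
    (f : MvPolynomial σ F) :
    aeval (fun i => ∑ j, C (M i j) * X j) (∑ i, X i ^ Fintype.card F * pderiv i f)
      = ∑ j, X j ^ Fintype.card F * pderiv j (aeval (fun i => ∑ j, C (M i j) * X j) f) := by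
  classical
  have hpow : ∀ i, (∑ j, C (M i j) * X j) ^ Fintype.card F
      = ∑ j, C (M i j) * (X j : MvPolynomial τ F) ^ Fintype.card F := fun i => by
    rw [← expand_card]
    simp only [map_sum, map_mul, expand_C, expand_X]
  have hpderiv : ∀ i j, pderiv j (∑ k, C (M i k) * X k) = C (M i j) := by
    simp [pderiv_X, Pi.single_apply]
  simp only [map_sum, map_mul, map_pow, aeval_X, hpow, Derivation.map_aeval_mvPolynomial, hpderiv,
    smul_eq_mul, Finset.sum_mul, Finset.mul_sum]
  rw [Finset.sum_comm]
  exact Finset.sum_congr rfl fun j _ => Finset.sum_congr rfl fun i _ => by ring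

theorem IsFrobeniusNonclassical.aeval_linear {τ : Type*} [Fintype τ] {f : MvPolynomial σ F}
    (hf : IsFrobeniusNonclassical f) (M : Matrix σ τ F) :
    IsFrobeniusNonclassical (aeval (fun i => ∑ j, C (M i j) * X j) f) := by
  rw [IsFrobeniusNonclassical, ← aeval_sum_X_pow_card_mul_pderiv]
  exact map_dvd _ hf

variable {g : MvPolynomial (Fin 2) F} {d : ℕ}

theorem IsFrobeniusNonclassical.dvd_X_pow_card_sub_X_mul_derivative
    (hf : IsFrobeniusNonclassical g) (hg : g.IsHomogeneous d) :
    aeval ![Polynomial.X, (1 : Polynomial F)] g ∣ (Polynomial.X ^ Fintype.card F - Polynomial.X)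
      * Polynomial.derivative (aeval ![Polynomial.X, (1 : Polynomial F)] g) := by
  unfold IsFrobeniusNonclassical at hf
  have hdvd := map_dvd (aeval ![Polynomial.X, (1 : Polynomial F)]) hf
  have heuler := congrArg (aeval ![Polynomial.X, (1 : Polynomial F)]) hg.sum_X_mul_pderiv
  simp only [Fin.sum_univ_two, map_add, map_mul, map_pow, map_nsmul, aeval_X,
    Matrix.cons_val_zero, Matrix.cons_val_one, one_pow, one_mul] at hdvd heuler
  have hsub : (Polynomial.X ^ Fintype.card F - Polynomial.X)
        * aeval ![Polynomial.X, (1 : Polynomial F)] (pderiv 0 g)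
      = Polynomial.X ^ Fintype.card F * aeval ![Polynomial.X, (1 : Polynomial F)] (pderiv 0 g)
        + aeval ![Polynomial.X, (1 : Polynomial F)] (pderiv 1 g)
        - d • aeval ![Polynomial.X, (1 : Polynomial F)] g := by
    rw [← heuler]
    ring
  rw [derivative_aeval_X_one, hsub, nsmul_eq_mul]
  exact dvd_sub hdvd (dvd_mul_left _ _)

theorem IsFrobeniusNonclassical.exists_eval_eq_zero {p : ℕ} [CharP F p]
    (hf : IsFrobeniusNonclassical g) (hg : g.IsHomogeneous d)
    (hgp : ¬ ∃ h : MvPolynomial (Fin 2) F, g = h ^ p) :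
    ∃ a b : F, (a ≠ 0 ∨ b ≠ 0) ∧ eval ![a, b] g = 0 := by
  obtain ⟨n, hp, -⟩ := FiniteField.card F p
  have : Fact p.Prime := ⟨hp⟩
  by_contra! hno
  refine hgp (hg.exists_eq_pow_of_derivative_aeval_eq_zero ?_ (hno 1 0 (.inl one_ne_zero)))
  refine Polynomial.derivative_eq_zero_of_dvd_X_pow_card_sub_X_mul
    (hf.dvd_X_pow_card_sub_X_mul_derivative hg) fun a ha => hno a 1 (.inr one_ne_zero) ?_
  rwa [← eval_aeval_X_one]

theorem IsFrobeniusNonclassical.dvd_rootMultiplicity {p : ℕ} [CharP F p]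
    (hf : IsFrobeniusNonclassical g) (hg : g.IsHomogeneous d) {K : Type*} [Field K] [Algebra F K]
    {α : K} (hα : α ∉ Set.range (algebraMap F K)) :
    p ∣ Polynomial.rootMultiplicity α
      ((aeval ![Polynomial.X, (1 : Polynomial F)] g).map (algebraMap F K)) := by
  have : CharP K p := charP_of_injective_algebraMap (algebraMap F K).injective p
  refine Polynomial.dvd_rootMultiplicity_of_dvd_mul_derivative p
    (Q := Polynomial.X ^ Fintype.card F - Polynomial.X) ?_ fun h => hα ?_
  · simpa [Polynomial.map_mul, Polynomial.derivative_map] using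
      Polynomial.map_dvd (algebraMap F K) (hf.dvd_X_pow_card_sub_X_mul_derivative hg)
  · exact FiniteField.mem_range_algebraMap_of_pow_card_eq (by simpa [sub_eq_zero] using h)

end FrobeniusNonclassical

end MvPolynomial

theorem stmt9_general {F : Type*} [Field F] [Fintype F] (q p n d : ℕ)
    (hq : Fintype.card F = q) (hp : p = ringChar F)
    (f : MvPolynomial (Fin (n + 1)) F) (hhom : f.IsHomogeneous d)
    (hfnc : f ∣ ∑ i, X i ^ q * pderiv i f)
    (M : Matrix (Fin (n + 1)) (Fin 2) F)
    (g : MvPolynomial (Fin 2) F)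
    (hg : g = aeval (fun i => ∑ j, C (M i j) * X j) f)
    (hgp : ¬ ∃ h : MvPolynomial (Fin 2) F, g = h ^ p) :
    (∃ a b : F, (a ≠ 0 ∨ b ≠ 0) ∧ eval ![a, b] g = 0) ∧
    (∀ α : AlgebraicClosure F, α ∉ Set.range (algebraMap F (AlgebraicClosure F)) →
      p ∣ Polynomial.rootMultiplicity α
        ((aeval ![Polynomial.X, (1 : Polynomial F)] g).map
          (algebraMap F (AlgebraicClosure F)))) := by
  subst hq hp
  have hgd : g.IsHomogeneous d := by
    have hlin : ∀ i, (∑ j, C (M i j) * X j : MvPolynomial (Fin 2) F).IsHomogeneous 1 :=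
      fun i => IsHomogeneous.sum _ _ _ fun j _ => isHomogeneous_C_mul_X (M i j) j
    simpa [hg] using hhom.aeval _ hlin
  have hgf : IsFrobeniusNonclassical g := hg ▸ IsFrobeniusNonclassical.aeval_linear hfnc M
  exact ⟨hgf.exists_eval_eq_zero hgd hgp, fun α hα => hgf.dvd_rootMultiplicity hgd hα⟩

/-- Let X = {F=0} ⊂ P^n be Frobenius nonclassical over F_q, and L an F_q-line
(parametrized injectively by a matrix M) not contained in X such that the binary
form g = F|_L is not a p-th power. Then L ∩ X contains an F_q-rational point,
and at every point of L ∩ X not defined over F_q (a root α ∉ F_q of the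
dehomogenization g(x,1)) the intersection multiplicity is divisible by p. -/
theorem stmt9 {F : Type*} [Field F] [Fintype F] (q p n d : ℕ)
    (hq : Fintype.card F = q) (hp : p = ringChar F)
    (f : MvPolynomial (Fin (n + 1)) F) (hhom : f.IsHomogeneous d)
    (hfnc : f ∣ ∑ i, X i ^ q * pderiv i f)
    (M : Matrix (Fin (n + 1)) (Fin 2) F) (hM : Function.Injective M.mulVec)
    (g : MvPolynomial (Fin 2) F)
    (hg : g = aeval (fun i => ∑ j, C (M i j) * X j) f)
    (hg0 : g ≠ 0)
    (hgp : ¬ ∃ h : MvPolynomial (Fin 2) F, g = h ^ p) :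
    (∃ a b : F, (a ≠ 0 ∨ b ≠ 0) ∧ eval ![a, b] g = 0) ∧
    (∀ α : AlgebraicClosure F, α ∉ Set.range (algebraMap F (AlgebraicClosure F)) →
      p ∣ Polynomial.rootMultiplicity α
        ((aeval ![Polynomial.X, (1 : Polynomial F)] g).map
          (algebraMap F (AlgebraicClosure F)))) :=
  stmt9_general q p n d hq hp f hhom hfnc M g hg hgp
end

section
/- Let f(x) ∈ F_q[x] be a nonzero polynomial that divides (x^q − x)·f'(x), and let α ∈ \bar{F_q} \ F_q be a root of f of multiplicity m ≥ 1. Then m is divisible by p = char(F_q). -/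
open Polynomial

/-- Let f ∈ F_q[x] be nonzero dividing (x^q − x)·f'(x), and α ∈ \bar{F_q} \ F_q a
root of f of multiplicity m ≥ 1. Then p = char F_q divides m. -/
theorem stmt10 {F : Type*} [Field F] [Fintype F] (q p : ℕ)
    (hq : Fintype.card F = q) (hp : p = ringChar F)
    (f : Polynomial F) (hf0 : f ≠ 0)
    (hdvd : f ∣ (Polynomial.X ^ q - Polynomial.X) * Polynomial.derivative f)
    (α : AlgebraicClosure F) (hα : α ∉ Set.range (algebraMap F (AlgebraicClosure F)))
    (m : ℕ) (hm : m = Polynomial.rootMultiplicity α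
      (f.map (algebraMap F (AlgebraicClosure F))))
    (h1 : 1 ≤ m) : p ∣ m := by
  classical
  have hq1 : 1 < q := hq ▸ Fintype.one_lt_card
  set φ := algebraMap F (AlgebraicClosure F) with hφ
  have hφinj : Function.Injective φ := φ.injective
  have hppr : p.Prime := hp ▸ CharP.char_is_prime F (ringChar F)
  haveI : CharP F p := hp ▸ ringChar.charP F
  haveI : CharP (AlgebraicClosure F) p := charP_of_injective_algebraMap hφinj p
  haveI : Fact p.Prime := ⟨hppr⟩
  set fb := f.map φ with hfb
  have hfb0 : fb ≠ 0 := (Polynomial.map_ne_zero_iff hφinj).mpr hf0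
  -- f̄ divides (X^q - X) * f̄'
  have hdvd' : fb ∣ (X ^ q - X) * derivative fb := by
    have := Polynomial.map_dvd φ hdvd
    rwa [Polynomial.map_mul, Polynomial.map_sub, Polynomial.map_pow, Polynomial.map_X,
      ← Polynomial.derivative_map] at this
  have hmpow : (X - C α) ^ m ∣ fb := by
    rw [hm]; exact Polynomial.pow_rootMultiplicity_dvd fb α
  -- α is not a root of X^q - X
  have hXq : ¬ (X - C α) ∣ (X ^ q - X : Polynomial (AlgebraicClosure F)) := by
    rw [Polynomial.dvd_iff_isRoot]
    intro hroot
    -- X^q - X over F splits into linear factors over all elements of F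
    have hroots := FiniteField.roots_X_pow_card_sub_X F
    rw [hq] at hroots
    have hmonic : (X ^ q - X : Polynomial F).Monic :=
      Polynomial.monic_X_pow_sub (Polynomial.degree_X_le.trans_lt (by exact_mod_cast hq1))
    have hcard : (X ^ q - X : Polynomial F).roots.card
        = (X ^ q - X : Polynomial F).natDegree := by
      rw [hroots, FiniteField.X_pow_card_sub_X_natDegree_eq F (hq ▸ Fintype.one_lt_card)]
      simpa using hq
    have hprod := Polynomial.prod_multiset_X_sub_C_of_monic_of_roots_card_eq hmonic hcard
    rw [hroots] at hprod
    have hsplit : (X ^ q - X : Polynomial (AlgebraicClosure F))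
        = ∏ a : F, (X - C (φ a)) := by
      calc (X ^ q - X : Polynomial (AlgebraicClosure F))
          = (X ^ q - X : Polynomial F).map φ := by
            simp [Polynomial.map_sub, Polynomial.map_pow]
        _ = _ := by
            rw [← hprod, Polynomial.map_multiset_prod, Multiset.map_map]
            rw [Finset.prod_eq_multiset_prod]
            congr 1
            apply Multiset.map_congr rfl
            intro a _
            simp
    rw [hsplit, Polynomial.IsRoot, Polynomial.eval_prod] at hroot
    obtain ⟨a, _, ha⟩ := Finset.prod_eq_zero_iff.mp hroot
    simp only [Polynomial.eval_sub, Polynomial.eval_X, Polynomial.eval_C, sub_eq_zero] at ha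
    exact hα ⟨a, ha.symm⟩
  by_cases hder : derivative fb = 0
  · -- f̄ = expand p (contract p f̄), so all multiplicities are divisible by p
    have hexp := Polynomial.expand_contract p hder hppr.ne_zero
    have hrm := Polynomial.rootMultiplicity_expand (p := p)
      (f := Polynomial.contract p fb) (r := α)
    rw [hexp] at hrm
    exact ⟨_, hm.trans hrm⟩
  · by_contra hpm
    have hmK : (m : AlgebraicClosure F) ≠ 0 := by
      simpa [CharP.cast_eq_zero_iff (AlgebraicClosure F) p m] using hpm
    have hroot : fb.IsRoot α := by
      rw [← Polynomial.rootMultiplicity_pos hfb0]; omega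
    have hderiv := Polynomial.derivative_rootMultiplicity_of_root_of_mem_nonZeroDivisors
      hroot (mem_nonZeroDivisors_of_ne_zero (by rwa [← hm]))
    have hpowdvd : (X - C α) ^ m ∣ derivative fb :=
      (Polynomial.prime_X_sub_C α).pow_dvd_of_dvd_mul_left m hXq (hmpow.trans hdvd')
    have hle : m ≤ (derivative fb).rootMultiplicity α :=
      (Polynomial.le_rootMultiplicity_iff hder).mpr hpowdvd
    rw [hderiv, ← hm] at hle
    omega
end

section
/- Let X = {F=0} ⊂ P^n be a hypersurface over F_q which is irreducible over F_q, Frobenius nonclassical, and contains an F_q-point P at which X is smooth. Then X is geometrically irreducible. -/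
open MvPolynomial

/-- A unit in a multivariate polynomial ring over a field is a constant. -/
private lemma mv_unit_eq_C {K : Type*} [Field K] :
    ∀ {m : ℕ} (p : MvPolynomial (Fin m) K), IsUnit p → ∃ c : K, p = C c := by
  intro m
  induction m with
  | zero =>
    intro p _
    obtain ⟨c, rfl⟩ := MvPolynomial.C_surjective (Fin 0) p
    exact ⟨c, rfl⟩
  | succ m ih =>
    intro p hp
    have hunit : IsUnit (finSuccEquiv K m p) := hp.map (finSuccEquiv K m)
    obtain ⟨r, hr, hC⟩ := Polynomial.isUnit_iff.mp hunit
    obtain ⟨c, rfl⟩ := ih r hr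
    refine ⟨c, ?_⟩
    have h2 := congrArg (finSuccEquiv K m).symm hC
    rw [AlgEquiv.symm_apply_apply] at h2
    rw [← h2]
    have h3 := RingHom.congr_fun (finSuccEquiv_comp_C_eq_C (R := K) m) c
    simpa using h3

/-- Every nonzero polynomial vanishing at a point has an irreducible factor vanishing there. -/
private lemma exists_irred_factor_eval_zero {K : Type*} [Field K] {m : ℕ}
    (P : Fin m → K) (a : MvPolynomial (Fin m) K) :
    a ≠ 0 → eval P a = 0 → ∃ g, Irreducible g ∧ g ∣ a ∧ eval P g = 0 := by
  induction a using WfDvdMonoid.induction_on_irreducible with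
  | zero => intro h; exact absurd rfl h
  | unit u hu =>
    intro _ h0
    exact absurd h0 (hu.map (eval P)).ne_zero
  | mul a i ha hi ih =>
    intro _ h0
    rw [map_mul] at h0
    rcases mul_eq_zero.1 h0 with h | h
    · exact ⟨i, hi, dvd_mul_right _ _, h⟩
    · obtain ⟨g, hg, hd, he⟩ := ih ha h
      exact ⟨g, hg, hd.mul_left _, he⟩

/-- Let X = {F=0} ⊂ P^n be a hypersurface over F_q, irreducible over F_q,
Frobenius nonclassical, and containing an F_q-point P at which X is smooth.
Then X is geometrically irreducible. -/
theorem stmt11 {F : Type*} [Field F] [Fintype F] (q d n : ℕ)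
    (hq : Fintype.card F = q)
    (f : MvPolynomial (Fin (n + 1)) F) (hhom : f.IsHomogeneous d)
    (hirr : Irreducible f)
    (hfnc : f ∣ ∑ i, X i ^ q * pderiv i f)
    (P : Fin (n + 1) → F) (hP0 : P ≠ 0) (hPX : eval P f = 0)
    (hsm : ∃ i, eval P (pderiv i f) ≠ 0) :
    Irreducible (MvPolynomial.map (algebraMap F (AlgebraicClosure F)) f) := by
  classical
  set K := AlgebraicClosure F
  set φ : F →+* K := algebraMap F K with hφdef
  have hφinj : Function.Injective φ := φ.injective
  set P' : Fin (n + 1) → K := fun i => φ (P i) with hP'def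
  set fK : MvPolynomial (Fin (n + 1)) K := MvPolynomial.map φ f with hfKdef
  -- characteristic
  set p : ℕ := ringChar F with hpdef
  haveI hcharF : CharP F p := ringChar.charP F
  obtain ⟨k, hpprime, hcard⟩ := FiniteField.card F p
  haveI : Fact p.Prime := ⟨hpprime⟩
  have hqpk : q = p ^ (k : ℕ) := hq ▸ hcard
  have hq2 : 1 < q := hq ▸ Fintype.one_lt_card
  haveI hcharK : CharP K p := inferInstance
  -- Frobenius
  set e : K ≃+* K := iterateFrobeniusEquiv K p k with hedef
  set τ : K →+* K := (e : K →+* K) with hτdef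
  have hτq : ∀ x : K, τ x = x ^ q := fun x => by
    rw [hqpk]; rfl
  -- τ fixes the image of F
  have hfixφ : ∀ a : F, τ (φ a) = φ a := by
    intro a
    rw [hτq, ← map_pow, ← hq, FiniteField.pow_card]
  -- fixed points of τ are in the image of F
  have hfix : ∀ x : K, τ x = x → ∃ a : F, φ a = x := by
    intro x hx
    by_contra hcon
    push_neg at hcon
    set S : Finset K := Finset.univ.image φ with hSdef
    have hxS : x ∉ S := by
      intro hmem
      obtain ⟨a, _, ha⟩ := Finset.mem_image.mp hmem
      exact hcon a ha
    have hScard : S.card = q := by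
      rw [hSdef, Finset.card_image_of_injective _ hφinj, Finset.card_univ, hq]
    set Q : Polynomial K := Polynomial.X ^ q - Polynomial.X with hQdef
    have hQne : Q ≠ 0 := FiniteField.X_pow_card_sub_X_ne_zero K hq2
    have hQdeg : Q.natDegree = q := FiniteField.X_pow_card_sub_X_natDegree_eq K hq2
    have hroots : (insert x S).val ⊆ Q.roots := by
      intro z hz
      have hz' : z ∈ insert x S := hz
      have hzq : z ^ q = z := by
        rcases Finset.mem_insert.mp hz' with rfl | hzS
        · rw [← hτq]; exact hx
        · obtain ⟨a, _, rfl⟩ := Finset.mem_image.mp hzS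
          rw [← map_pow, ← hq, FiniteField.pow_card]
      rw [Polynomial.mem_roots hQne]
      simp [hQdef, Polynomial.IsRoot, sub_eq_zero, hzq]
    have hle : (insert x S).card ≤ Q.natDegree :=
      Polynomial.card_le_degree_of_subset_roots hroots
    rw [Finset.card_insert_of_notMem hxS, hScard, hQdeg] at hle
    omega
  -- evaluation commutation
  have hcomm : ∀ g : MvPolynomial (Fin (n + 1)) F, eval P' (MvPolynomial.map φ g) = φ (eval P g) := by
    intro g
    rw [eval_map]
    have h1 := eval₂_comp_left φ (RingHom.id F) P g
    rw [eval₂_id, RingHom.comp_id] at h1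
    exact h1.symm
  have hσcomm : ∀ g : MvPolynomial (Fin (n + 1)) K, eval P' (MvPolynomial.map τ g) = τ (eval P' g) := by
    intro g
    rw [eval_map]
    have h1 := eval₂_comp_left τ (RingHom.id K) P' g
    rw [eval₂_id, RingHom.comp_id] at h1
    have h2 : (⇑τ) ∘ P' = P' := funext fun i => hfixφ (P i)
    rw [h2] at h1
    exact h1.symm
  -- τ fixes fK
  have hτφ : τ.comp φ = φ := RingHom.ext hfixφ
  have hσfK : MvPolynomial.map τ fK = fK := by
    rw [hfKdef, map_map, hτφ]
  -- basic facts
  have hfK0 : fK ≠ 0 := by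
    intro h
    exact hirr.ne_zero (map_injective φ hφinj (by rw [map_zero, ← hfKdef]; exact h))
  have hevalfK : eval P' fK = 0 := by rw [hfKdef, hcomm, hPX, map_zero]
  -- Lemma A: two cofactors cannot both vanish at P'
  obtain ⟨i₀, hi₀⟩ := hsm
  have lemA : ∀ g H : MvPolynomial (Fin (n + 1)) K,
      fK = g * H → eval P' g = 0 → eval P' H = 0 → False := by
    intro g H hgH hge hHe
    have hne : eval P' (pderiv i₀ fK) ≠ 0 := by
      rw [hfKdef, pderiv_map, hcomm]
      intro h
      exact hi₀ (hφinj (by rw [h, map_zero]))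
    apply hne
    rw [hgH, pderiv_mul, map_add, map_mul, map_mul, hge, hHe, mul_zero, zero_mul, add_zero]
  -- extract an irreducible factor of fK vanishing at P'
  obtain ⟨g₀, hg₀irr, hg₀dvd, hg₀eval⟩ := exists_irred_factor_eval_zero P' fK hfK0 hevalfK
  obtain ⟨H, hH⟩ := hg₀dvd
  have hHeval : eval P' H ≠ 0 := fun h => lemA g₀ H hH hg₀eval h
  -- Frobenius twist of g₀
  have hg₀'irr : Irreducible (MvPolynomial.map τ g₀) := by
    have : Irreducible (mapEquiv (Fin (n + 1)) e g₀) := hg₀irr.map (mapEquiv (Fin (n + 1)) e)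
    exact this
  have hg₀'eval : eval P' (MvPolynomial.map τ g₀) = 0 := by
    rw [hσcomm, hg₀eval, map_zero]
  have hdvd' : MvPolynomial.map τ g₀ ∣ g₀ * H := by
    refine ⟨MvPolynomial.map τ H, ?_⟩
    rw [← hH, ← hσfK, hH, map_mul]
  have hprime : Prime (MvPolynomial.map τ g₀) :=
    (UniqueFactorizationMonoid.irreducible_iff_prime).mp hg₀'irr
  have hndH : ¬ MvPolynomial.map τ g₀ ∣ H := by
    rintro ⟨H₂, hH₂⟩
    exact hHeval (by rw [hH₂, map_mul, hg₀'eval, zero_mul])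
  have hdg : MvPolynomial.map τ g₀ ∣ g₀ := (hprime.dvd_or_dvd hdvd').resolve_right hndH
  have hassoc : Associated (MvPolynomial.map τ g₀) g₀ :=
    hg₀'irr.associated_of_dvd hg₀irr hdg
  -- get the unit relating them; it is a constant
  obtain ⟨u, hu⟩ := hassoc
  obtain ⟨cu, hcu⟩ := mv_unit_eq_C (u : MvPolynomial (Fin (n + 1)) K) u.isUnit
  -- normalize g₀
  have hg₀ne : g₀ ≠ 0 := hg₀irr.ne_zero
  obtain ⟨m₀, hm₀⟩ : ∃ m₀, coeff m₀ g₀ ≠ 0 := by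
    by_contra hcon
    push_neg at hcon
    exact hg₀ne (MvPolynomial.ext _ _ fun m => by rw [hcon m, coeff_zero])
  set c₀ : K := coeff m₀ g₀ with hc₀def
  set g₁ : MvPolynomial (Fin (n + 1)) K := C c₀⁻¹ * g₀ with hg₁def
  have hcoeffg₁ : coeff m₀ g₁ = 1 := by
    rw [hg₁def, coeff_C_mul, inv_mul_cancel₀ hm₀]
  have hCc₀unit : IsUnit (C c₀ : MvPolynomial (Fin (n + 1)) K) :=
    IsUnit.of_mul_eq_one (C c₀⁻¹) (by rw [← C_mul, mul_inv_cancel₀ hm₀, C_1])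
  have hg₀g₁ : g₀ = C c₀ * g₁ := by
    rw [hg₁def, ← mul_assoc, ← C_mul, mul_inv_cancel₀ hm₀, C_1, one_mul]
  have hg₁irr : Irreducible g₁ := by
    have : Associated g₀ g₁ := by
      refine Associated.symm ⟨hCc₀unit.unit, ?_⟩
      rw [IsUnit.unit_spec, mul_comm, ← hg₀g₁]
    exact this.irreducible hg₀irr
  -- map τ g₁ = C a * g₁ for some constant a; comparing coefficients gives a = 1
  have hτg₀ : MvPolynomial.map τ g₀ = C cu⁻¹ * g₀ := by
    have h1 : MvPolynomial.map τ g₀ * C cu = g₀ := by rw [← hcu, hu]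
    have hcune : (cu : K) ≠ 0 := by
      intro h
      have := u.isUnit
      rw [hcu, h, C_0] at this
      exact this.ne_zero rfl
    calc MvPolynomial.map τ g₀ = C cu⁻¹ * (MvPolynomial.map τ g₀ * C cu) := by
          rw [mul_comm (MvPolynomial.map τ g₀) (C cu), ← mul_assoc, ← C_mul,
            inv_mul_cancel₀ hcune, C_1, one_mul]
      _ = C cu⁻¹ * g₀ := by rw [h1]
  have hτg₁ : MvPolynomial.map τ g₁ = g₁ := by
    have h1 : MvPolynomial.map τ g₁ = C (τ c₀⁻¹ * cu⁻¹) * g₀ := by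
      rw [hg₁def, map_mul, MvPolynomial.map_C, hτg₀, C_mul]; ring
    have h2 : coeff m₀ (MvPolynomial.map τ g₁) = 1 := by
      rw [coeff_map, hcoeffg₁, map_one]
    rw [h1, coeff_C_mul, ← hc₀def] at h2
    have h3 : τ c₀⁻¹ * cu⁻¹ = c₀⁻¹ := eq_inv_of_mul_eq_one_left h2
    rw [h1, h3, ← hg₁def]
  -- descend g₁ to F
  have hg₁coeff : ∀ m, ∃ a : F, φ a = coeff m g₁ := by
    intro m
    apply hfix
    have := congrArg (coeff m) hτg₁
    rwa [coeff_map] at this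
  choose gc hgc using hg₁coeff
  set g₂ : MvPolynomial (Fin (n + 1)) F :=
    ∑ m ∈ g₁.support, monomial m (gc m) with hg₂def
  have hmapg₂ : MvPolynomial.map φ g₂ = g₁ := by
    rw [hg₂def, map_sum]
    conv_rhs => rw [← support_sum_monomial_coeff g₁]
    refine Finset.sum_congr rfl fun m _ => ?_
    rw [map_monomial, hgc]
  -- the cofactor
  set H' : MvPolynomial (Fin (n + 1)) K := C c₀ * H with hH'def
  have hfKg₁H' : fK = g₁ * H' := by
    rw [hH, hg₀g₁, hH'def]; ring
  have hg₁ne : g₁ ≠ 0 := hg₁irr.ne_zero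
  have hτH' : MvPolynomial.map τ H' = H' := by
    have h1 : MvPolynomial.map τ g₁ * MvPolynomial.map τ H' = g₁ * H' := by
      rw [← map_mul, ← hfKg₁H', hσfK, hfKg₁H']
    rw [hτg₁] at h1
    exact mul_left_cancel₀ hg₁ne h1
  have hH'coeff : ∀ m, ∃ a : F, φ a = coeff m H' := by
    intro m
    apply hfix
    have := congrArg (coeff m) hτH'
    rwa [coeff_map] at this
  choose hc hhc using hH'coeff
  set h₂ : MvPolynomial (Fin (n + 1)) F :=
    ∑ m ∈ H'.support, monomial m (hc m) with hh₂def
  have hmaph₂ : MvPolynomial.map φ h₂ = H' := by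
    rw [hh₂def, map_sum]
    conv_rhs => rw [← support_sum_monomial_coeff H']
    refine Finset.sum_congr rfl fun m _ => ?_
    rw [map_monomial, hhc]
  -- conclude
  have hffact : f = g₂ * h₂ := by
    apply map_injective φ hφinj
    rw [map_mul, hmapg₂, hmaph₂, ← hfKg₁H', hfKdef]
  rcases hirr.isUnit_or_isUnit hffact with hg₂u | hh₂u
  · exact absurd (hmapg₂ ▸ hg₂u.map (MvPolynomial.map φ)) hg₁irr.not_isUnit
  · have hH'u : IsUnit H' := hmaph₂ ▸ hh₂u.map (MvPolynomial.map φ)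
    have : Associated g₁ fK := ⟨hH'u.unit, by rw [IsUnit.unit_spec, ← hfKg₁H']⟩
    exact this.irreducible hg₁irr
end

section
/- Let X ⊂ P^n (n ≥ 1) be a hypersurface over F_q of degree d that is space-filling, i.e., X(F_q) = P^n(F_q). Then d ≥ q+1. -/
open MvPolynomial

theorem MvPolynomial.IsHomogeneous.eval_smul {R σ : Type*} [CommSemiring R]
    {f : MvPolynomial σ R} {d : ℕ} (hf : f.IsHomogeneous d) (c : R) (x : σ → R) :
    eval (c • x) f = c ^ d * eval x f := by
  simp only [eval_eq, Finset.mul_sum]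
  refine Finset.sum_congr rfl fun s hs => ?_
  rw [← hf (mem_support_iff.mp hs), Finsupp.weight_apply, Finsupp.sum,
    ← Finset.prod_pow_eq_pow_sum]
  simp only [Pi.one_apply, Pi.smul_apply, smul_eq_mul, mul_one, mul_pow, Finset.prod_mul_distrib]
  ring

theorem stmt12_general {F : Type*} [Field F] [Fintype F] (q d n : ℕ)
    (hq : Fintype.card F = q)
    (f : MvPolynomial (Fin (n + 1)) F) (hf0 : f ≠ 0) (hhom : f.IsHomogeneous d)
    (hfill : ∀ b : Fin (n + 1) → F, b ≠ 0 → eval b f = 0) :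
    q + 1 ≤ d := by
  by_contra! hdq
  have hvanish : ∀ b, eval b f = 0 := by
    intro b
    rcases eq_or_ne b 0 with rfl | hb
    · rw [← zero_smul F 1, hhom.eval_smul, hfill 1 one_ne_zero, mul_zero]
    · exact hfill b hb
  refine hf0 (hhom.eq_zero_of_forall_eval_eq_zero_of_le_card hvanish ?_)
  rw [Cardinal.mk_fintype, hq]
  exact_mod_cast Nat.le_of_lt_succ hdq

/-- A space-filling hypersurface X = {F=0} ⊂ P^n over F_q (n ≥ 1), i.e. one with
X(F_q) = P^n(F_q), has degree at least q+1. -/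
theorem stmt12 {F : Type*} [Field F] [Fintype F] (q d n : ℕ)
    (hq : Fintype.card F = q) (hn : 1 ≤ n)
    (f : MvPolynomial (Fin (n + 1)) F) (hf0 : f ≠ 0) (hhom : f.IsHomogeneous d)
    (hfill : ∀ b : Fin (n + 1) → F, b ≠ 0 → eval b f = 0) :
    q + 1 ≤ d :=
  stmt12_general q d n hq f hf0 hhom hfill
end

section
/- Let X ⊂ P^n (n ≥ 2) be a hypersurface over F_q of degree d that contains at least one smooth F_q-rational point and satisfies #X(F_q) ≥ #P^n(F_q) − 1. Then d ≥ q+1. -/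
/-!
Suppose `d ≤ q`. By the point count `f` is nonzero at no more than one projective point, so it
vanishes off some line `F ∙ v₀`. Let `b` be the smooth zero. For `c` outside the plane
`span {b, v₀}`, which is a proper subspace because `n ≥ 2`, the form `f` vanishes on all of
`span {b, c}`. Its restriction `(s, t) ↦ f (s • b + t • c)` is then a binary form of degree
`d ≤ q` vanishing on `F²`, hence the zero polynomial, and its coefficient of `s ^ (d - 1) * t` is
the derivative of `f` at `b` in the direction `c`. So the differential of `f` at `b` vanishes off
a proper subspace, hence everywhere, contradicting smoothness.
-/

open MvPolynomial

theorem Set.subsingleton_compl_of_card_sub_one_le {α : Type*} [Finite α] {s : Set α}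
    (h : Nat.card α - 1 ≤ s.ncard) : sᶜ.Subsingleton := by
  rw [← Set.ncard_le_one_iff_subsingleton, Set.ncard_compl]
  omega

theorem Submodule.span_pair_ne_top {R M : Type*} [Ring R] [StrongRankCondition R]
    [AddCommGroup M] [Module R M] (h : 2 < Module.finrank R M) (u v : M) :
    span R {u, v} ≠ ⊤ := by
  classical
  intro htop
  have hle := finrank_span_finset_le_card (R := R) ({u, v} : Finset M)
  rw [Set.finrank, Finset.coe_pair, htop, finrank_top] at hle
  have := Finset.card_le_two (a := u) (b := v)
  omega

theorem LinearMap.eq_zero_of_forall_notMem {R M N : Type*} [Ring R] [AddCommGroup M]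
    [Module R M] [AddCommMonoid N] [Module R N] (ℓ : M →ₗ[R] N) {p : Submodule R M}
    (hp : p ≠ ⊤) (h : ∀ x ∉ p, ℓ x = 0) : ℓ = 0 := by
  obtain ⟨x, -, hx⟩ := SetLike.exists_of_lt (lt_top_iff_ne_top.2 hp)
  ext w
  by_cases hw : w ∈ p
  · have hwx : w + x ∉ p := fun h => hx ((p.add_mem_iff_right hw).1 h)
    simpa [h x hx] using h (w + x) hwx
  · exact h w hw

namespace MvPolynomial

section CommSemiring

variable {R σ : Type*} [CommSemiring R]

theorem IsHomogeneous.eval_smul_s13 {φ : MvPolynomial σ R} {n : ℕ} (hφ : φ.IsHomogeneous n)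
    (r : R) (x : σ → R) : eval (r • x) φ = r ^ n * eval x φ := by
  simp only [eval_eq, Finset.mul_sum]
  refine Finset.sum_congr rfl fun s hs => ?_
  simp only [hφ.degree_eq_sum_deg_support hs, Pi.smul_apply, smul_eq_mul, mul_pow,
    Finset.prod_mul_distrib, Finset.prod_pow_eq_pow_sum]
  ring

theorem coeff_zero_aeval_line (b c : σ → R) (φ : MvPolynomial σ R) :
    (aeval (fun i => Polynomial.C (b i) + Polynomial.C (c i) * Polynomial.X) φ).coeff 0 =
      eval b φ := by
  rw [Polynomial.coeff_zero_eq_eval_zero, ← Polynomial.coe_aeval_eq_eval, comp_aeval_apply]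
  simp

theorem coeff_one_aeval_line [Fintype σ] [DecidableEq σ] (b c : σ → R)
    (φ : MvPolynomial σ R) :
    (aeval (fun i => Polynomial.C (b i) + Polynomial.C (c i) * Polynomial.X) φ).coeff 1 =
      ∑ i, c i * eval b (pderiv i φ) := by
  induction φ using MvPolynomial.induction_on with
  | C a => simp
  | add p q hp hq =>
    simp only [map_add, Polynomial.coeff_add, hp, hq, mul_add, Finset.sum_add_distrib]
  | mul_X p i hp =>
    simp [Polynomial.coeff_mul, Finset.Nat.antidiagonal_succ, hp, coeff_zero_aeval_line,
      Pi.single_apply, mul_add, Finset.sum_add_distrib, apply_ite, Finset.sum_mul]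
    rw [add_comm, mul_comm]
    exact congrArg _ (Finset.sum_congr rfl fun j _ => by ring)

end CommSemiring

section CommRing

variable {R σ : Type*} [CommRing R] [IsDomain R] [Fintype σ] [DecidableEq σ]
    {φ : MvPolynomial σ R} {n : ℕ}

theorem IsHomogeneous.sum_mul_eval_pderiv_eq_zero (hφ : φ.IsHomogeneous n)
    (hn : n ≤ Cardinal.mk R) {b c : σ → R} (h : ∀ s t : R, eval (s • b + t • c) φ = 0) :
    ∑ i, c i * eval b (pderiv i φ) = 0 := by
  set g : σ → MvPolynomial (Fin 2) R := fun i => C (b i) * X 0 + C (c i) * X 1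
  have hG : (MvPolynomial.aeval g φ).IsHomogeneous n := by
    simpa using hφ.aeval g fun i =>
      (isHomogeneous_C_mul_X (b i) 0).add (isHomogeneous_C_mul_X (c i) 1)
  have hG0 : MvPolynomial.aeval g φ = 0 := by
    refine hG.eq_zero_of_forall_eval_eq_zero_of_le_card (fun r => ?_) hn
    rw [show eval r (MvPolynomial.aeval g φ) = eval (fun i => eval r (g i)) φ from
      eval₂Hom_bind₁ _ _ _ _]
    convert h (r 0) (r 1) using 3
    funext i
    simp [g, mul_comm]
  have hline : MvPolynomial.aeval ![1, Polynomial.X] (MvPolynomial.aeval g φ) =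
      MvPolynomial.aeval (fun i => Polynomial.C (b i) + Polynomial.C (c i) * Polynomial.X) φ := by
    rw [comp_aeval_apply]
    simp [g, Polynomial.algebraMap_eq]
  rw [← coeff_one_aeval_line, ← hline, hG0, map_zero, Polynomial.coeff_zero]

end CommRing

section Field

variable {K σ : Type*} [Field K] {φ : MvPolynomial σ K} {n : ℕ}

theorem IsHomogeneous.eval_rep_mk_eq_zero_iff (hφ : φ.IsHomogeneous n) {v : σ → K}
    (hv : v ≠ 0) : eval (Projectivization.mk K v hv).rep φ = 0 ↔ eval v φ = 0 := by
  obtain ⟨a, ha⟩ := Projectivization.exists_smul_eq_mk_rep K v hv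
  rw [← ha, Units.smul_def, hφ.eval_smul_s13]
  simp [a.ne_zero]

theorem IsHomogeneous.exists_forall_notMem_span_singleton_eval_eq_zero
    (hφ : φ.IsHomogeneous n)
    (hsub : {P : Projectivization K (σ → K) | eval P.rep φ = 0}ᶜ.Subsingleton) :
    ∃ v₀ : σ → K, ∀ v ∉ K ∙ v₀, eval v φ = 0 := by
  by_cases h : ∃ v₀ ≠ 0, eval v₀ φ ≠ 0
  · obtain ⟨v₀, hv₀, hφv₀⟩ := h
    refine ⟨v₀, fun v hv => by_contra fun hφv => hv ?_⟩
    have hv0 : v ≠ 0 := by rintro rfl; exact hv (Submodule.zero_mem _)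
    have hmk : Projectivization.mk K v hv0 = Projectivization.mk K v₀ hv₀ :=
      hsub (mt (hφ.eval_rep_mk_eq_zero_iff hv0).1 hφv)
        (mt (hφ.eval_rep_mk_eq_zero_iff hv₀).1 hφv₀)
    obtain ⟨a, rfl⟩ := (Projectivization.mk_eq_mk_iff' K v v₀ hv0 hv₀).1 hmk
    exact Submodule.smul_mem _ a (Submodule.mem_span_singleton_self v₀)
  · push Not at h
    exact ⟨0, fun v hv => h v fun hv0 => hv (by simp [hv0])⟩

theorem IsHomogeneous.eval_smul_add_smul_eq_zero (hφ : φ.IsHomogeneous n) {b v₀ c : σ → K}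
    (hb : eval b φ = 0) (hv₀ : ∀ v ∉ K ∙ v₀, eval v φ = 0)
    (hc : c ∉ Submodule.span K {b, v₀}) (s t : K) : eval (s • b + t • c) φ = 0 := by
  rcases eq_or_ne t 0 with rfl | ht
  · simp [hφ.eval_smul_s13, hb]
  refine hv₀ _ fun hmem => hc ?_
  set W := Submodule.span K {b, v₀}
  have hsum : s • b + t • c ∈ W :=
    Submodule.span_mono (by simp [Set.subset_def]) hmem
  have hsb : s • b ∈ W := W.smul_mem s (Submodule.subset_span (by simp))
  rw [← W.smul_mem_iff ht]
  simpa using W.sub_mem hsum hsb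

end Field

end MvPolynomial

theorem stmt13_general {F : Type*} [Field F] [Fintype F] (q d n : ℕ)
    (hq : Fintype.card F = q) (hn : 2 ≤ n)
    (f : MvPolynomial (Fin (n + 1)) F) (hhom : f.IsHomogeneous d)
    (hsm : ∃ b : Fin (n + 1) → F, b ≠ 0 ∧ eval b f = 0 ∧
      ∃ i, eval b (pderiv i f) ≠ 0)
    (hcard : Nat.card (Projectivization F (Fin (n + 1) → F)) - 1 ≤
      Nat.card {P : Projectivization F (Fin (n + 1) → F) // eval P.rep f = 0}) :
    q + 1 ≤ d := by
  obtain ⟨b, -, hfb, i, hi⟩ := hsm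
  by_contra! hdq
  have hsub : {P : Projectivization F (Fin (n + 1) → F) | eval P.rep f = 0}ᶜ.Subsingleton :=
    Set.subsingleton_compl_of_card_sub_one_le (by rwa [← Nat.card_coe_set_eq])
  obtain ⟨v₀, hv₀⟩ := hhom.exists_forall_notMem_span_singleton_eval_eq_zero hsub
  have hW : Submodule.span F {b, v₀} ≠ ⊤ :=
    Submodule.span_pair_ne_top (by simp only [Module.finrank_fin_fun]; omega) b v₀
  have hdF : (d : Cardinal) ≤ Cardinal.mk F := by
    rw [Cardinal.mk_fintype, hq]
    exact_mod_cast Nat.lt_succ_iff.mp hdq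
  have hdf : Fintype.linearCombination F (fun j => eval b (pderiv j f)) = 0 :=
    LinearMap.eq_zero_of_forall_notMem _ hW fun c hc => by
      simpa [Fintype.linearCombination_apply] using hhom.sum_mul_eval_pderiv_eq_zero hdF
        (hhom.eval_smul_add_smul_eq_zero hfb hv₀ hc)
  exact hi (by simpa using LinearMap.congr_fun hdf (Pi.single i 1))

/-- Let X = {F=0} ⊂ P^n (n ≥ 2) be a hypersurface of degree d over F_q containing
a smooth F_q-point and satisfying #X(F_q) ≥ #P^n(F_q) − 1. Then d ≥ q+1. -/
theorem stmt13 {F : Type*} [Field F] [Fintype F] (q d n : ℕ)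
    (hq : Fintype.card F = q) (hn : 2 ≤ n)
    (f : MvPolynomial (Fin (n + 1)) F) (hf0 : f ≠ 0) (hhom : f.IsHomogeneous d)
    (hsm : ∃ b : Fin (n + 1) → F, b ≠ 0 ∧ eval b f = 0 ∧
      ∃ i, eval b (pderiv i f) ≠ 0)
    (hcard : Nat.card (Projectivization F (Fin (n + 1) → F)) - 1 ≤
      Nat.card {P : Projectivization F (Fin (n + 1) → F) // eval P.rep f = 0}) :
    q + 1 ≤ d :=
  stmt13_general q d n hq hn f hhom hsm hcard
end

section
/- Let α ∈ F_q[x_0,...,x_n] be a homogeneous polynomial that is either zero or nonzero of degree q−1, and consider the F_q-vector space V spanned by the n+1 polynomials x_j^q − α·x_j (j = 0,...,n). If dim V ≤ n, then dim V = n and there is an invertible F_q-linear change of coordinates y_0,...,y_n such that α = y_0^{q-1}, and the polynomials y_j^q − y_0^{q-1} y_j for j = 1,...,n form a basis of V. -/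
/-!
With `ℓ_c = ∑ c_j X_j`, Frobenius gives `∑ c_j (X_j^q - α X_j) = ℓ_c^q - α ℓ_c`, so `V` is the
image of the `F`-linear map `c ↦ ℓ_c^q - α ℓ_c`. If `dim V ≤ n` this map has a nonzero kernel
vector `c`, and then `α = ℓ_c^(q-1)`. Any other kernel vector `c'` gives `ℓ_{c'}^(q-1) = ℓ_c^(q-1)`;
as `ℓ_c` is prime in the factorial ring `F[x]`, it divides `ℓ_{c'}`, so `c'` is proportional to `c`.
The kernel is therefore the line `F c`, and completing `c` to a basis (the rows of `g`, with `c`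
as row `0`) shows that the images of the remaining rows form a basis of `V`.
-/

open MvPolynomial

namespace MvPolynomial

section LinearForm

variable {σ K : Type*} [Fintype σ]

noncomputable def linearForm [CommSemiring K] : (σ → K) →ₗ[K] MvPolynomial σ K :=
  Fintype.linearCombination K X

theorem linearForm_apply [CommSemiring K] (c : σ → K) :
    linearForm c = ∑ j, C (c j) * X j := by
  simp [linearForm, Fintype.linearCombination_apply, smul_eq_C_mul]

theorem linearForm_injective [CommSemiring K] :
    Function.Injective (linearForm : (σ → K) → MvPolynomial σ K) :=
  linearIndependent_iff_injective_fintypeLinearCombination.mp (linearIndependent_X σ K)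

theorem linearForm_ne_zero [CommSemiring K] {c : σ → K} (hc : c ≠ 0) : linearForm c ≠ 0 :=
  fun h => hc (linearForm_injective (h.trans (map_zero _).symm))

theorem isHomogeneous_linearForm [CommSemiring K] (c : σ → K) :
    (linearForm c).IsHomogeneous 1 := by
  rw [linearForm_apply]
  exact IsHomogeneous.sum _ _ _ fun j _ => isHomogeneous_C_mul_X _ _

variable [Field K]

theorem prime_linearForm {c : σ → K} (hc : c ≠ 0) : Prime (linearForm c) := by
  have hne := linearForm_ne_zero hc
  refine (irreducible_of_totalDegree_eq_one ((isHomogeneous_linearForm c).totalDegree hne)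
    fun x hx => ?_).prime
  obtain ⟨d, hd⟩ := ne_zero_iff.mp hne
  exact (isUnit_iff_ne_zero).mpr fun hx0 => hd (zero_dvd_iff.mp (hx0 ▸ hx d))

theorem exists_eq_smul_of_linearForm_pow_eq {m : ℕ} (hm : m ≠ 0) {c c' : σ → K} (hc : c ≠ 0)
    (h : linearForm c' ^ m = linearForm c ^ m) : ∃ a : K, c' = a • c := by
  obtain ⟨t, ht⟩ : linearForm c ∣ linearForm c' :=
    (prime_linearForm hc).dvd_of_dvd_pow (by rw [h]; exact dvd_pow_self _ hm)
  rcases eq_or_ne c' 0 with rfl | hc'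
  · exact ⟨0, (zero_smul K c).symm⟩
  have ht0 : t ≠ 0 := by rintro rfl; exact linearForm_ne_zero hc' (by rw [ht, mul_zero])
  have hdeg : t.totalDegree = 0 := by
    have := congrArg totalDegree ht
    rw [totalDegree_mul_of_isDomain (linearForm_ne_zero hc) ht0,
      (isHomogeneous_linearForm c').totalDegree (linearForm_ne_zero hc'),
      (isHomogeneous_linearForm c).totalDegree (linearForm_ne_zero hc)] at this
    omega
  refine ⟨t.coeff 0, linearForm_injective ?_⟩
  rw [ht, map_smul, smul_eq_C_mul, ← totalDegree_eq_zero_iff_eq_C.mp hdeg, mul_comm]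

end LinearForm

section FiniteField

variable {σ F : Type*} [Fintype σ] [Field F] [Fintype F]

theorem linearForm_pow_card (c : σ → F) :
    linearForm c ^ Fintype.card F = ∑ j, c j • X j ^ Fintype.card F := by
  obtain ⟨m, hp, hcard⟩ := FiniteField.card F (ringChar F)
  have := ringChar.charP F
  have : Fact (ringChar F).Prime := ⟨hp⟩
  rw [linearForm, Fintype.linearCombination_apply, hcard, sum_pow_char_pow]
  refine Finset.sum_congr rfl fun j _ => ?_
  rw [smul_pow, ← hcard, FiniteField.pow_card]

noncomputable def frobeniusSubMul (α : MvPolynomial σ F) : (σ → F) →ₗ[F] MvPolynomial σ F :=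
  Fintype.linearCombination F fun j => X j ^ Fintype.card F - α * X j

variable {α : MvPolynomial σ F}

theorem frobeniusSubMul_apply (c : σ → F) :
    frobeniusSubMul α c = linearForm c ^ Fintype.card F - α * linearForm c := by
  rw [linearForm_pow_card, linearForm, Fintype.linearCombination_apply, Finset.mul_sum]
  simp only [frobeniusSubMul, Fintype.linearCombination_apply, smul_sub, Finset.sum_sub_distrib,
    mul_smul_comm]

theorem eq_linearForm_pow_of_frobeniusSubMul_eq_zero {c : σ → F} (hc : c ≠ 0)
    (h : frobeniusSubMul α c = 0) : α = linearForm c ^ (Fintype.card F - 1) := by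
  rw [frobeniusSubMul_apply, sub_eq_zero, ← Nat.sub_one_add_one Fintype.card_ne_zero,
    pow_succ] at h
  exact (mul_right_cancel₀ (linearForm_ne_zero hc) h).symm

theorem ker_frobeniusSubMul {c : σ → F} (hc : c ≠ 0) (h : frobeniusSubMul α c = 0) :
    LinearMap.ker (frobeniusSubMul α) = F ∙ c := by
  refine le_antisymm (fun c' hc' => ?_) ((Submodule.span_singleton_le_iff_mem _ _).mpr h)
  rcases eq_or_ne c' 0 with rfl | hc'0
  · exact zero_mem _
  have hm : Fintype.card F - 1 ≠ 0 := Nat.sub_ne_zero_of_lt Fintype.one_lt_card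
  obtain ⟨a, rfl⟩ := exists_eq_smul_of_linearForm_pow_eq hm hc
    ((eq_linearForm_pow_of_frobeniusSubMul_eq_zero hc'0 hc').symm.trans
      (eq_linearForm_pow_of_frobeniusSubMul_eq_zero hc h))
  exact Submodule.smul_mem _ a (Submodule.mem_span_singleton_self c)

end FiniteField

end MvPolynomial

theorem LinearMap.linearIndependent_comp_tail_of_ker_eq {K M N : Type*} [DivisionRing K]
    [AddCommGroup M] [Module K M] [AddCommGroup N] [Module K N] {n : ℕ} (f : M →ₗ[K] N)
    {b : Fin (n + 1) → M} (hb : LinearIndependent K b) (hker : LinearMap.ker f = K ∙ b 0) :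
    LinearIndependent K (f ∘ Fin.tail b) := by
  rw [← Fin.cons_self_tail b, linearIndependent_finCons] at hb
  refine hb.1.map ?_
  have hb0 : b 0 ≠ 0 := fun h0 => hb.2 (h0 ▸ zero_mem _)
  rw [hker]
  exact (Submodule.disjoint_span_singleton' hb0).mpr hb.2

theorem LinearMap.span_range_comp_tail_eq_range {R M N : Type*} [Semiring R] [AddCommMonoid M]
    [Module R M] [AddCommMonoid N] [Module R N] {n : ℕ} (f : M →ₗ[R] N) {b : Fin (n + 1) → M}
    (hb : Submodule.span R (Set.range b) = ⊤) (h0 : f (b 0) = 0) :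
    Submodule.span R (Set.range (f ∘ Fin.tail b)) = LinearMap.range f := by
  rw [LinearMap.range_eq_map, ← hb, Submodule.map_span, ← Set.range_comp, Fin.range_fin_succ]
  simp only [Function.comp_apply, h0, Submodule.span_insert_zero]
  rfl

theorem Matrix.exists_isUnit_row_zero_eq {K : Type*} [Field K] {n : ℕ} {c : Fin (n + 1) → K}
    (hc : c ≠ 0) : ∃ g : Matrix (Fin (n + 1)) (Fin (n + 1)) K, IsUnit g ∧ g 0 = c := by
  classical
  obtain ⟨k, hk⟩ := Function.ne_iff.mp hc
  refine ⟨((1 : Matrix _ _ K).updateRow k c).submatrix (Equiv.swap 0 k) id, ?_, ?_⟩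
  · rw [Matrix.isUnit_iff_isUnit_det, Matrix.det_permute]
    have hrow : ∑ i, c i • (1 : Matrix _ _ K) i = c := by
      ext j
      simp [Matrix.one_apply]
    have hdet := Matrix.det_updateRow_sum (1 : Matrix _ _ K) k c
    rw [hrow, Matrix.det_one, smul_eq_mul, mul_one] at hdet
    rw [hdet]
    exact ((Equiv.Perm.sign _).isUnit.map (Int.castRingHom K)).mul (isUnit_iff_ne_zero.mpr hk)
  · funext j
    simp

theorem stmt19_general {F : Type*} [Field F] [Fintype F] (q n : ℕ) (hq : Fintype.card F = q)
    (α : MvPolynomial (Fin (n + 1)) F)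
    (V : Submodule F (MvPolynomial (Fin (n + 1)) F))
    (hV : V = Submodule.span F (Set.range fun j : Fin (n + 1) => X j ^ q - α * X j))
    (hdim : Module.finrank F V ≤ n) :
    Module.finrank F V = n ∧
    ∃ g : Matrix (Fin (n + 1)) (Fin (n + 1)) F, IsUnit g ∧
      α = (∑ j, C (g 0 j) * X j) ^ (q - 1) ∧
      LinearIndependent F (fun i : Fin n =>
        (∑ j, C (g i.succ j) * X j) ^ q - α * (∑ j, C (g i.succ j) * X j)) ∧
      Submodule.span F (Set.range fun i : Fin n =>
        (∑ j, C (g i.succ j) * X j) ^ q - α * (∑ j, C (g i.succ j) * X j)) = V := by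
  subst hq hV
  set Φ := frobeniusSubMul α
  have hrange : Submodule.span F (Set.range fun j => X j ^ Fintype.card F - α * X j) =
      LinearMap.range Φ := (Fintype.range_linearCombination F _).symm
  obtain ⟨c, hrel, j, hcj⟩ := Fintype.not_linearIndependent_iff.mp
    fun hli : LinearIndependent F fun j => X j ^ Fintype.card F - α * X j => by
      have := finrank_span_eq_card hli
      rw [Fintype.card_fin] at this
      omega
  have hΦc : Φ c = 0 := hrel
  have hc : c ≠ 0 := fun h0 => hcj (congrFun h0 j)
  obtain ⟨g, hg, rfl⟩ := Matrix.exists_isUnit_row_zero_eq hc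
  have hrows := Matrix.linearIndependent_rows_of_isUnit hg
  have hfam : (fun i : Fin n => (∑ j, C (g i.succ j) * X j) ^ Fintype.card F -
      α * ∑ j, C (g i.succ j) * X j) = Φ ∘ Fin.tail g.row := by
    funext i
    simp [Φ, frobeniusSubMul_apply, linearForm_apply, Fin.tail, Matrix.row]
  have hind : LinearIndependent F (Φ ∘ Fin.tail g.row) :=
    Φ.linearIndependent_comp_tail_of_ker_eq hrows (ker_frobeniusSubMul hc hΦc)
  have hspan : Submodule.span F (Set.range (Φ ∘ Fin.tail g.row)) = LinearMap.range Φ :=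
    Φ.span_range_comp_tail_eq_range (hrows.span_eq_top_of_card_eq_finrank' (by simp)) hΦc
  rw [hrange]
  refine ⟨by rw [← hspan, finrank_span_eq_card hind, Fintype.card_fin], g, hg, ?_, hfam ▸ hind,
    hfam ▸ hspan⟩
  rw [← linearForm_apply]
  exact eq_linearForm_pow_of_frobeniusSubMul_eq_zero hc hΦc

/-- Let α ∈ F_q[x_0,...,x_n] be homogeneous, either zero or of degree q−1, and
let V be the F_q-span of the n+1 polynomials x_j^q − α x_j. If dim V ≤ n, then
dim V = n and there is an invertible F_q-linear change of coordinates
y_i = Σ_j g_{ij} x_j such that α = y_0^{q-1} and the polynomials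
y_j^q − α y_j = y_j^q − y_0^{q-1} y_j (j = 1,...,n) form a basis of V. -/
theorem stmt19 {F : Type*} [Field F] [Fintype F] (q n : ℕ) (hq : Fintype.card F = q)
    (α : MvPolynomial (Fin (n + 1)) F) (hα : α.IsHomogeneous (q - 1))
    (V : Submodule F (MvPolynomial (Fin (n + 1)) F))
    (hV : V = Submodule.span F (Set.range fun j : Fin (n + 1) => X j ^ q - α * X j))
    (hdim : Module.finrank F V ≤ n) :
    Module.finrank F V = n ∧
    ∃ g : Matrix (Fin (n + 1)) (Fin (n + 1)) F, IsUnit g ∧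
      α = (∑ j, C (g 0 j) * X j) ^ (q - 1) ∧
      LinearIndependent F (fun i : Fin n =>
        (∑ j, C (g i.succ j) * X j) ^ q - α * (∑ j, C (g i.succ j) * X j)) ∧
      Submodule.span F (Set.range fun i : Fin n =>
        (∑ j, C (g i.succ j) * X j) ^ q - α * (∑ j, C (g i.succ j) * X j)) = V :=
  stmt19_general q n hq α V hV hdim
end
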